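/- arXiv:2511.17280 — 7 statements merged into one kernel-verified Lean document; each statement's English description precedes it below -/
import Mathlib

section
/- Let m ∈ ℕ be even and let 0 ≤ x_1 ≤ x_2 ≤ ⋯ ≤ x_m. Then E[(−1)^{Σ_{j=1}^m T(x_j)}] = ℙ{L(x_{2j}) − L(x_{2j−1}) = 0 for all j = 1, …, m/2}. -/
open MeasureTheory ProbabilityTheory Set

/-!
Since the `U_m` are nonnegative and not a.s. zero, the strong law of large numbers (applied to
`min U_m 1`) gives `S_k → ∞` almost surely, so a.s. `L` is a genuine finite count and is
nondecreasing in `t`. Exchanging sums, `Σ_i T(x_i) = Σ_l c_l η_l` with `c_l = #{i | l ≤ L(x_i)}`.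
Because `η` is independent of `U`, the values `n_i = L(x_i)` may be frozen, and for fixed `n`
independence and `E[(-1)^{η_l}] = 0` give `E[(-1)^{Σ_l c_l η_l}] = 1` if every `c_l` is even and
`0` otherwise. For `n` nondecreasing and `m` even, `{i | l ≤ n_i}` is a final segment of `Fin m`,
so all `c_l` are even exactly when `n_{2j} = n_{2j+1}` for every pair.
-/

open Filter
open scoped Finset

lemma natCard_eq_iff_exists_finset_or_infinite {α : Type*} (s : Set α) (n : ℕ) :
    Nat.card s = n ↔ (∃ F : Finset α, F.card = n ∧ s = F) ∨ (n = 0 ∧ s.Infinite) := by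
  rcases s.finite_or_infinite with hs | hs
  · obtain ⟨F, rfl⟩ := hs.exists_finset_coe
    simp [Finset.finite_toSet, eq_comm]
  · have hnot : ¬∃ F : Finset α, F.card = n ∧ s = F := fun ⟨F, _, hF⟩ => hs (hF ▸ F.finite_toSet)
    rw [hs.card_eq_zero, or_iff_right hnot]
    exact ⟨fun h => ⟨h.symm, hs⟩, fun h => h.1.symm⟩

lemma measurable_natCard_subtype {α : Type*} [MeasurableSpace α] {p : ℕ → α → Prop}
    (hp : ∀ k, Measurable (p k)) : Measurable fun a => Nat.card {k // p k a} := by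
  refine measurable_to_countable' fun n => ?_
  have hfin : ∀ F : Finset ℕ, Measurable fun a => {k | p k a} = ↑F := fun F => by
    simp only [Set.ext_iff, Finset.mem_coe]
    exact Measurable.forall fun k => (hp k).iff measurable_const
  have hinf : Measurable fun a => {k | p k a}.Infinite := by
    simp only [← Nat.frequently_atTop_iff_infinite, frequently_atTop]
    exact Measurable.forall fun N => Measurable.exists fun k => measurable_const.and (hp k)
  change MeasurableSet {a | Nat.card {k | p k a} = n}
  simp only [natCard_eq_iff_exists_finset_or_infinite]
  exact measurableSet_setOfPred.2 <| (Measurable.exists fun F => measurable_const.and (hfin F)).or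
    (measurable_const.and hinf)

/-- `Nat.card` of an infinite type is `0`, so this is the number of renewals up to time `t` only
when the partial sums of `u` tend to infinity. -/
noncomputable def renewalCount (u : ℕ → ℝ) (t : ℝ) : ℕ :=
  Nat.card {k : ℕ // 1 ≤ k ∧ ∑ j ∈ Finset.range k, u j ≤ t}

lemma measurable_renewalCount (t : ℝ) : Measurable fun u => renewalCount u t :=
  measurable_natCard_subtype fun _ => measurable_const.and <| measurableSet_setOfPred.1 <|
    measurableSet_le (Finset.measurable_sum _ fun j _ => measurable_pi_apply j) measurable_const

lemma monotone_renewalCount {u : ℕ → ℝ}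
    (hu : Tendsto (fun k => ∑ j ∈ Finset.range k, u j) atTop atTop) :
    Monotone (renewalCount u) := by
  intro a b hab
  have hfin : {k | ¬ b < ∑ j ∈ Finset.range k, u j}.Finite :=
    eventually_cofinite.1 (Nat.cofinite_eq_atTop ▸ hu.eventually_gt_atTop b)
  exact Nat.card_mono (hfin.subset fun k hk => not_lt.2 hk.2) fun k hk => ⟨hk.1, hk.2.trans hab⟩

lemma sum_sum_range_succ_eq_sum_card_mul {ι : Type*} [Fintype ι] (n : ι → ℕ) (e : ℕ → ℕ)
    {K : ℕ} (hK : ∀ i, n i < K) :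
    ∑ i, ∑ l ∈ Finset.range (n i + 1), e l = ∑ l ∈ Finset.range K, #{i | l ≤ n i} * e l := by
  have hrange : ∀ i, Finset.range (n i + 1) = {l ∈ Finset.range K | l ≤ n i} := fun i => by
    ext l
    simp only [Finset.mem_range, Finset.mem_filter]
    have := hK i
    omega
  simp only [hrange, Finset.sum_filter, Finset.card_filter, Finset.sum_mul]
  rw [Finset.sum_comm]
  simp

lemma filter_le_eq_Ici {α β : Type*} [Fintype α] [LinearOrder α] [LocallyFiniteOrderTop α]
    [LinearOrder β] {f : α → β} (hf : Monotone f) {a : α} {b : β} (ha : b ≤ f a)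
    (hlt : ∀ i < a, ¬ b ≤ f i) : ({i | b ≤ f i} : Finset α) = Finset.Ici a := by
  ext i
  simp only [Finset.mem_filter, Finset.mem_univ, true_and, Finset.mem_Ici]
  exact ⟨fun h => not_lt.1 fun hi => hlt i hi h, fun hi => ha.trans (hf hi)⟩

lemma forall_even_card_le_iff {m : ℕ} (hm : Even m) {n : Fin m → ℕ} (hn : Monotone n) :
    (∀ l, Even #{i | l ≤ n i}) ↔
      ∀ j (h : 2 * j + 1 < m), n ⟨2 * j + 1, h⟩ ≤ n ⟨2 * j, by omega⟩ := by
  rw [Nat.even_iff] at hm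
  constructor
  · intro heven j h
    by_contra hgt
    have hF := filter_le_eq_Ici hn (le_refl (n ⟨2 * j + 1, h⟩)) fun i hi hle => hgt <|
      hle.trans (hn (Fin.le_def.2 (Nat.le_of_lt_succ (Fin.lt_def.1 hi))))
    have hcard := heven (n ⟨2 * j + 1, h⟩)
    rw [hF, Fin.card_Ici, Nat.even_iff] at hcard
    dsimp only at hcard
    omega
  · intro hpair l
    by_contra hodd
    have hne : ({i | l ≤ n i} : Finset (Fin m)).Nonempty :=
      Finset.card_pos.1 (Nat.pos_of_ne_zero fun h => hodd (h ▸ Even.zero))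
    set a := Finset.min' _ hne
    have ha : l ≤ n a := (Finset.mem_filter.1 (Finset.min'_mem _ hne)).2
    have hlt : ∀ i < a, ¬ l ≤ n i := fun i hi hle =>
      not_le.2 hi (Finset.min'_le _ _ (Finset.mem_filter.2 ⟨Finset.mem_univ i, hle⟩))
    rw [filter_le_eq_Ici hn ha hlt, Fin.card_Ici, Nat.even_iff] at hodd
    obtain ⟨j, hj⟩ : ∃ j, (a : ℕ) = 2 * j + 1 := ⟨a / 2, by have := a.isLt; omega⟩
    have h : 2 * j + 1 < m := hj ▸ a.isLt
    have ha' : a = ⟨2 * j + 1, h⟩ := Fin.ext hj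
    exact hlt ⟨2 * j, by omega⟩ (Fin.lt_def.2 (by dsimp only; omega))
      ((ha' ▸ ha).trans (hpair j h))

section Probability

variable {Ω : Type*} [MeasurableSpace Ω] {P : Measure Ω} [IsProbabilityMeasure P]

lemma integral_neg_one_pow_eq_zero {ξ : Ω → ℕ} (hξ : Measurable ξ)
    (h1 : P {ω | ξ ω = 1} = 1 / 2) (h0 : P {ω | ξ ω = 0} = 1 / 2) :
    ∫ ω, (-1 : ℝ) ^ ξ ω ∂P = 0 := by
  have hs0 : MeasurableSet {ω | ξ ω = 0} := hξ (measurableSet_singleton 0)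
  have hs1 : MeasurableSet {ω | ξ ω = 1} := hξ (measurableSet_singleton 1)
  have hdisj : Disjoint {ω | ξ ω = 0} {ω | ξ ω = 1} :=
    Set.disjoint_left.2 fun ω h0 h1 => by simp_all
  have hcover : ∀ᵐ ω ∂P, ξ ω = 0 ∨ ξ ω = 1 := by
    refine (ae_iff_measure_eq (hs0.union hs1).nullMeasurableSet).2 ?_
    rw [measure_univ]
    exact (measure_union hdisj hs1).trans (by rw [h0, h1, ENNReal.add_halves])
  calc ∫ ω, (-1 : ℝ) ^ ξ ω ∂P
      = ∫ ω, ({ω | ξ ω = 0}.indicator 1 ω - {ω | ξ ω = 1}.indicator 1 ω : ℝ) ∂P := by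
        refine integral_congr_ae (hcover.mono fun ω hω => ?_)
        rcases hω with h | h <;> simp [h, Set.indicator]
    _ = 0 := by
        rw [integral_sub ((integrable_const 1).indicator hs0) ((integrable_const 1).indicator hs1),
          integral_indicator_one hs0, integral_indicator_one hs1, measureReal_def,
          measureReal_def, h0, h1, sub_self]

section FairCoins

variable {η : ℕ → Ω → ℕ} (hmeas : ∀ l, Measurable (η l)) (hindep : iIndepFun η P)
  (hfair : ∀ l, ∫ ω, (-1 : ℝ) ^ η l ω ∂P = 0)
include hmeas hindep hfair

lemma integral_neg_one_pow_sum_mul (c : ℕ → ℕ) (s : Finset ℕ) :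
    ∫ ω, (-1 : ℝ) ^ (∑ l ∈ s, c l * η l ω) ∂P = if ∀ l ∈ s, Even (c l) then 1 else 0 := by
  have hfactor : ∀ l, ∫ ω, ((-1 : ℝ) ^ c l) ^ η l ω ∂P = if Even (c l) then 1 else 0 := by
    intro l
    rcases Nat.even_or_odd (c l) with h | h
    · simp [h.neg_one_pow, h]
    · simp [h.neg_one_pow, Nat.not_even_iff_odd.2 h, hfair]
  have hindep' : iIndepFun (fun l : s => fun ω => ((-1 : ℝ) ^ c l) ^ η l ω) P :=
    (hindep.comp (fun l k => ((-1 : ℝ) ^ c l) ^ k) fun _ => measurable_from_nat).precomp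
      Subtype.val_injective
  calc ∫ ω, (-1 : ℝ) ^ (∑ l ∈ s, c l * η l ω) ∂P
      = ∫ ω, ∏ l : s, ((-1 : ℝ) ^ c l) ^ η l ω ∂P := by
        congr with ω
        rw [Finset.prod_coe_sort s fun l => ((-1 : ℝ) ^ c l) ^ η l ω]
        simp only [← pow_mul, Finset.prod_pow_eq_pow_sum]
    _ = ∏ l : s, ∫ ω, ((-1 : ℝ) ^ c l) ^ η l ω ∂P :=
        hindep'.integral_fun_prod_eq_prod_integral fun l =>
          (measurable_from_nat.comp (hmeas l)).aestronglyMeasurable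
    _ = if ∀ l ∈ s, Even (c l) then 1 else 0 := by
        rw [Finset.prod_coe_sort s fun l => ∫ ω, ((-1 : ℝ) ^ c l) ^ η l ω ∂P]
        simp only [hfactor, Finset.prod_boole]

open Classical in
lemma integral_neg_one_pow_sum_sum_range {ι : Type*} [Fintype ι] (n : ι → ℕ) :
    ∫ ω, (-1 : ℝ) ^ (∑ i, ∑ l ∈ Finset.range (n i + 1), η l ω) ∂P =
      if ∀ l, Even #{i | l ≤ n i} then 1 else 0 := by
  set K := Finset.univ.sup n + 1
  have hK : ∀ i, n i < K := fun i => Nat.lt_succ_of_le (Finset.le_sup (Finset.mem_univ i))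
  simp only [sum_sum_range_succ_eq_sum_card_mul n _ hK]
  rw [integral_neg_one_pow_sum_mul hmeas hindep hfair]
  refine if_congr ⟨fun h l => ?_, fun h l _ => h l⟩ rfl rfl
  by_cases hl : l < K
  · exact h l (Finset.mem_range.2 hl)
  · have : #{i | l ≤ n i} = 0 := by
      simp only [Finset.card_eq_zero, Finset.filter_eq_empty_iff]
      intro i _
      have := hK i
      omega
    simp [this]

end FairCoins

lemma integral_comp_eq_integral_integral_of_indepFun {ι β : Type*} [MeasurableSpace ι]
    [Countable ι] [MeasurableSingletonClass ι] [MeasurableSpace β] {N : Ω → ι} {Z : Ω → β}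
    (hN : Measurable N) (hZ : Measurable Z) (hNZ : IndepFun N Z P) {Φ : ι → β → ℝ}
    (hΦ : ∀ n, Measurable (Φ n)) {C : ℝ} (hC : ∀ n z, |Φ n z| ≤ C) :
    ∫ ω, Φ (N ω) (Z ω) ∂P = ∫ ω, ∫ ω', Φ (N ω) (Z ω') ∂P ∂P := by
  have hΦm : Measurable (Function.uncurry Φ) := measurable_from_prod_countable_right hΦ
  have hlaw : P.map (fun ω => (N ω, Z ω)) = (P.map N).prod (P.map Z) :=
    (indepFun_iff_map_prod_eq_prod_map_map hN.aemeasurable hZ.aemeasurable).1 hNZ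
  have hint : Integrable (Function.uncurry Φ) ((P.map N).prod (P.map Z)) :=
    Integrable.of_bound hΦm.aestronglyMeasurable C (ae_of_all _ fun p => hC p.1 p.2)
  calc ∫ ω, Φ (N ω) (Z ω) ∂P
      = ∫ p, Function.uncurry Φ p ∂(P.map fun ω => (N ω, Z ω)) :=
        (integral_map (hN.prodMk hZ).aemeasurable hΦm.aestronglyMeasurable).symm
    _ = ∫ n, ∫ z, Φ n z ∂(P.map Z) ∂(P.map N) := by rw [hlaw, integral_prod _ hint]; rfl
    _ = ∫ n, ∫ ω', Φ n (Z ω') ∂P ∂(P.map N) := by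
        congr with n
        exact integral_map hZ.aemeasurable (hΦ n).aestronglyMeasurable
    _ = ∫ ω, ∫ ω', Φ (N ω) (Z ω') ∂P ∂P :=
        integral_map hN.aemeasurable (measurable_of_countable _).aestronglyMeasurable

lemma ae_tendsto_sum_atTop_of_iid {X : ℕ → Ω → ℝ} (hmeas : ∀ i, Measurable (X i))
    (hnonneg : ∀ i ω, 0 ≤ X i ω) (hindep : iIndepFun X P)
    (hident : ∀ i, IdentDistrib (X i) (X 0) P P) (hX0 : P {ω | X 0 ω = 0} < 1) :
    ∀ᵐ ω ∂P, Tendsto (fun n => ∑ i ∈ Finset.range n, X i ω) atTop atTop := by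
  have hmin : Measurable fun x : ℝ => min x 1 := measurable_id.min measurable_const
  set Y : ℕ → Ω → ℝ := fun i ω => min (X i ω) 1
  have hY0 : Integrable (Y 0) P :=
    Integrable.of_bound (hmin.comp (hmeas 0)).aestronglyMeasurable 1 (ae_of_all _ fun ω => by
      simp [Y, abs_le]; linarith [hnonneg 0 ω])
  have hsupp : Function.support (Y 0) = {ω | X 0 ω = 0}ᶜ := by
    ext ω
    refine not_congr ⟨fun h => ?_, fun (h : X 0 ω = 0) => by simp [Y, h]⟩
    rcases min_choice (X 0 ω) 1 with h' | h' <;> simp_all [Y]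
  have hmean : 0 < P[Y 0] := by
    rw [integral_pos_iff_support_of_nonneg (fun ω => le_min (hnonneg 0 ω) zero_le_one) hY0, hsupp,
      prob_compl_eq_one_sub (measurableSet_eq_fun (hmeas 0) measurable_const)]
    exact tsub_pos_of_lt hX0
  have hlaw := strong_law_ae Y hY0
    (fun i j hij => (hindep.comp (fun _ => fun x => min x 1) fun _ => hmin).indepFun hij)
    fun i => (hident i).comp hmin
  filter_upwards [hlaw] with ω hω
  have hYsum : Tendsto (fun n => ∑ i ∈ Finset.range n, Y i ω) atTop atTop := by
    refine (tendsto_natCast_atTop_atTop.atTop_mul_pos hmean hω).congr' ?_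
    filter_upwards [eventually_ne_atTop 0] with n hn
    simp [smul_eq_mul, hn]
  exact tendsto_atTop_mono (fun n => Finset.sum_le_sum fun i _ => min_le_left _ _) hYsum

end Probability

theorem renewal_parity_expectation_general
    {Ω : Type*} [MeasurableSpace Ω] (P : Measure Ω) [IsProbabilityMeasure P]
    (U : ℕ → Ω → ℝ) (η : ℕ → Ω → ℕ)
    (hUmeas : ∀ m, Measurable (U m))
    (hUnonneg : ∀ m ω, 0 ≤ U m ω)
    (hUindep : iIndepFun (fun m => U (m + 1)) P)
    (hUident : ∀ m, IdentDistrib (U (m + 1)) (U 1) P P)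
    (hU0 : P {ω | U 1 ω = 0} < 1)
    (hηmeas : ∀ m, Measurable (η m))
    (hηindep : iIndepFun η P)
    (hηbern : ∀ m, P {ω | η m ω = 1} = 1 / 2 ∧ P {ω | η m ω = 0} = 1 / 2)
    (hUη : IndepFun (fun ω (m : ℕ) => U (m + 1) ω) (fun ω (m : ℕ) => η m ω) P)
    (S : ℕ → Ω → ℝ) (hS : ∀ k ω, S k ω = ∑ i ∈ Finset.range k, U (i + 1) ω)
    (L : ℝ → Ω → ℕ) (hL : ∀ t ω, L t ω = Nat.card {k : ℕ // 1 ≤ k ∧ S k ω ≤ t})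
    (T : ℝ → Ω → ℕ) (hT : ∀ t ω, T t ω = ∑ l ∈ Finset.range (L t ω + 1), η l ω)
    (m : ℕ) (hm : Even m) (x : Fin m → ℝ) (hxmono : Monotone x) :
    ∫ ω, (-1 : ℝ) ^ (∑ j, T (x j) ω) ∂P =
      (P {ω | ∀ j : ℕ, ∀ h : 2 * j + 1 < m,
          L (x ⟨2 * j + 1, h⟩) ω - L (x ⟨2 * j, Nat.lt_of_succ_lt h⟩) ω = 0}).toReal := by
  classical
  set N : Ω → Fin m → ℕ := fun ω i => renewalCount (fun k => U (k + 1) ω) (x i)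
  have hLN : ∀ i ω, L (x i) ω = N ω i := fun i ω => by simp only [N, hL, hS, renewalCount]
  have hcount : Measurable fun u (i : Fin m) => renewalCount u (x i) :=
    measurable_pi_lambda _ fun i => measurable_renewalCount (x i)
  have hNmeas : Measurable N := hcount.comp (measurable_pi_lambda _ fun k => hUmeas (k + 1))
  have hNmono : ∀ᵐ ω ∂P, Monotone (N ω) := by
    filter_upwards [ae_tendsto_sum_atTop_of_iid (fun i => hUmeas (i + 1)) (fun i => hUnonneg _)
      hUindep hUident hU0] with ω hω
    exact (monotone_renewalCount hω).comp hxmono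
  have hfair : ∀ l, ∫ ω, (-1 : ℝ) ^ η l ω ∂P = 0 := fun l =>
    integral_neg_one_pow_eq_zero (hηmeas l) (hηbern l).1 (hηbern l).2
  set E := N ⁻¹' {n | ∀ j : ℕ, ∀ h : 2 * j + 1 < m, n ⟨2 * j + 1, h⟩ - n ⟨2 * j, by omega⟩ = 0}
  simp only [hT, hLN]
  calc ∫ ω, (-1 : ℝ) ^ (∑ i, ∑ l ∈ Finset.range (N ω i + 1), η l ω) ∂P
      = ∫ ω, ∫ ω', (-1 : ℝ) ^ (∑ i, ∑ l ∈ Finset.range (N ω i + 1), η l ω') ∂P ∂P :=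
        integral_comp_eq_integral_integral_of_indepFun hNmeas (measurable_pi_lambda _ hηmeas)
          (hUη.comp hcount measurable_id)
          (Φ := fun n e => (-1 : ℝ) ^ (∑ i, ∑ l ∈ Finset.range (n i + 1), e l))
          (fun n => by fun_prop) (C := 1) fun n e => by simp
    _ = ∫ ω, E.indicator 1 ω ∂P := by
        refine integral_congr_ae ?_
        filter_upwards [hNmono] with ω hω
        rw [integral_neg_one_pow_sum_sum_range hηmeas hηindep hfair, forall_even_card_le_iff hm hω,
          Set.indicator_apply]
        exact if_congr (forall₂_congr fun j h => Nat.sub_eq_zero_iff_le.symm) rfl rfl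
    _ = (P E).toReal := by
        rw [integral_indicator_one (hNmeas (Set.to_countable _).measurableSet), measureReal_def]

/-- For the renewal reward process `T(t) = Σ_{l=0}^{L(t)} η_l`: if `m` is even and
`0 ≤ x₁ ≤ ⋯ ≤ x_m`, then
`E[(-1)^{Σ_j T(x_j)}] = P{L(x_{2j}) - L(x_{2j-1}) = 0 for all j = 1, …, m/2}`. -/
theorem renewal_parity_expectation
    {Ω : Type*} [MeasurableSpace Ω] (P : Measure Ω) [IsProbabilityMeasure P]
    (U : ℕ → Ω → ℝ) (η : ℕ → Ω → ℕ)
    (hUmeas : ∀ m, Measurable (U m))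
    (hUnonneg : ∀ m ω, 0 ≤ U m ω)
    (hUindep : iIndepFun (fun m => U (m + 1)) P)
    (hUident : ∀ m, IdentDistrib (U (m + 1)) (U 1) P P)
    (hU0 : P {ω | U 1 ω = 0} < 1)
    (hηmeas : ∀ m, Measurable (η m))
    (hηindep : iIndepFun η P)
    (hηbern : ∀ m, P {ω | η m ω = 1} = 1 / 2 ∧ P {ω | η m ω = 0} = 1 / 2)
    (hUη : IndepFun (fun ω (m : ℕ) => U (m + 1) ω) (fun ω (m : ℕ) => η m ω) P)
    (S : ℕ → Ω → ℝ) (hS : ∀ k ω, S k ω = ∑ i ∈ Finset.range k, U (i + 1) ω)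
    (L : ℝ → Ω → ℕ) (hL : ∀ t ω, L t ω = Nat.card {k : ℕ // 1 ≤ k ∧ S k ω ≤ t})
    (T : ℝ → Ω → ℕ) (hT : ∀ t ω, T t ω = ∑ l ∈ Finset.range (L t ω + 1), η l ω)
    (m : ℕ) (hm : Even m) (x : Fin m → ℝ) (hx0 : ∀ i, 0 ≤ x i) (hxmono : Monotone x) :
    ∫ ω, (-1 : ℝ) ^ (∑ j, T (x j) ω) ∂P =
      (P {ω | ∀ j : ℕ, ∀ h : 2 * j + 1 < m,
          L (x ⟨2 * j + 1, h⟩) ω - L (x ⟨2 * j, Nat.lt_of_succ_lt h⟩) ω = 0}).toReal :=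
  renewal_parity_expectation_general P U η hUmeas hUnonneg hUindep hUident hU0 hηmeas hηindep hηbern
    hUη S hS L hL T hT m hm x hxmono
end

section
/- For every k ≥ 1 and all real numbers 0 ≤ s_1 ≤ t_1 ≤ s_2 ≤ t_2 ≤ ⋯ ≤ s_k ≤ t_k, we have ℙ{L(t_j) − L(s_j) = 0 for all j = 1, …, k} ≤ exp(−λ Σ_{j=1}^k (t_j − s_j)). -/
open MeasureTheory ProbabilityTheory Set

/-- `expNegE x = exp (-x)` for `x ∈ [0, ∞]`, with the convention `exp (-∞) = 0`. -/
noncomputable def expNegE (x : ENNReal) : ENNReal :=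
  if x = ⊤ then 0 else ENNReal.ofReal (Real.exp (-x.toReal))

/-!
Decompose the event according to the last renewal `n` before `s_k`. The first `n` interarrival
times are independent of the next one, and a failure rate `≥ λ` means
`P(U > a + b) ≤ e^{-λ b} P(U > a)` for `a, b ≥ 0`; hence jumping over `(s_k, t_k]` costs a factor
`e^{-λ (t_k - s_k)}` compared with merely passing `s_k`, and induction on `k` gives the product.
The counts `L t` are junk (`Nat.card` of an infinite set is `0`) only when the renewal times stay
bounded, which has probability zero by the second Borel–Cantelli lemma.
-/

open Filter Finset

lemma expNegE_zero : expNegE 0 = 1 := by simp [expNegE]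

lemma expNegE_antitone : Antitone expNegE := by
  intro x y hxy
  rcases eq_or_ne y ⊤ with rfl | hy
  · simp [expNegE]
  · have hx : x ≠ ⊤ := ne_top_of_le_ne_top hy hxy
    simp only [expNegE, if_neg hx, if_neg hy]
    gcongr

lemma expNegE_add (x y : ENNReal) : expNegE (x + y) = expNegE x * expNegE y := by
  rcases eq_or_ne x ⊤ with rfl | hx
  · simp [expNegE]
  rcases eq_or_ne y ⊤ with rfl | hy
  · simp [expNegE]
  simp only [expNegE, if_neg hx, if_neg hy, if_neg (ENNReal.add_ne_top.2 ⟨hx, hy⟩),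
    ENNReal.toReal_add hx hy, neg_add, Real.exp_add, ENNReal.ofReal_mul (Real.exp_pos _).le]

lemma expNegE_ofReal_le (y : ℝ) : expNegE (ENNReal.ofReal y) ≤ ENNReal.ofReal (Real.exp (-y)) := by
  rcases le_total 0 y with hy | hy
  · simp [expNegE, ENNReal.toReal_ofReal hy]
  · rw [ENNReal.ofReal_of_nonpos hy, expNegE_zero, ← ENNReal.ofReal_one]
    exact ENNReal.ofReal_le_ofReal (Real.one_le_exp (by linarith))

/-- Integrated form of "failure rate at least `lam` on `[0, ∞)`": at every age `a ≥ 0` the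
residual lifetime is stochastically smaller than an exponential variable of rate `lam`. -/
def HazardRateGE (ν : Measure ℝ) (lam : ℝ) : Prop :=
  ∀ a b : ℝ, 0 ≤ a → 0 ≤ b → ν (Ioi (a + b)) ≤ ENNReal.ofReal (Real.exp (-lam * b)) * ν (Ioi a)

lemma hazardRateGE_of_survival {ν : Measure ℝ} {r : ℝ → ℝ} {lam : ℝ}
    (hν : ∀ t, 0 ≤ t → ν (Ioi t) = expNegE (∫⁻ s in Ioc 0 t, ENNReal.ofReal (r s)))
    (hr : ∀ s, 0 ≤ s → lam ≤ r s) : HazardRateGE ν lam := by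
  intro a b ha hb
  have hlow : ENNReal.ofReal (lam * b) ≤ ∫⁻ s in Ioc a (a + b), ENNReal.ofReal (r s) :=
    calc ENNReal.ofReal (lam * b) = ∫⁻ _ in Ioc a (a + b), ENNReal.ofReal lam := by
          rw [setLIntegral_const, Real.volume_Ioc, add_sub_cancel_left, ENNReal.ofReal_mul' hb]
      _ ≤ ∫⁻ s in Ioc a (a + b), ENNReal.ofReal (r s) :=
          setLIntegral_mono' measurableSet_Ioc fun s hs =>
            ENNReal.ofReal_le_ofReal (hr s (ha.trans hs.1.le))
  rw [hν a ha, hν (a + b) (by linarith), ← Ioc_union_Ioc_eq_Ioc ha (by linarith),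
    lintegral_union measurableSet_Ioc (Ioc_disjoint_Ioc_of_le le_rfl), mul_comm]
  calc _ ≤ expNegE ((∫⁻ s in Ioc 0 a, ENNReal.ofReal (r s)) + ENNReal.ofReal (lam * b)) :=
        expNegE_antitone (by gcongr)
    _ ≤ _ := by
        rw [expNegE_add, neg_mul]
        gcongr
        exact expNegE_ofReal_le _

section Independence

variable {Ω β : Type*} [MeasurableSpace Ω] [MeasurableSpace β] {P : Measure Ω}
  [IsFiniteMeasure P] {W : Ω → β} {Y : Ω → ℝ} {f : β → ℝ} {D : Set β}

lemma measure_mem_lt_add_eq_lintegral (hW : Measurable W) (hY : Measurable Y)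
    (hWY : IndepFun W Y P) (hf : Measurable f) (hD : MeasurableSet D) (c : ℝ) :
    P {ω | W ω ∈ D ∧ c < f (W ω) + Y ω} = ∫⁻ x in D, P.map Y (Ioi (c - f x)) ∂P.map W := by
  set T : Set (β × ℝ) := {p | p.1 ∈ D ∧ c < f p.1 + p.2}
  have hT : MeasurableSet T :=
    (hD.preimage measurable_fst).inter
      (measurableSet_lt measurable_const ((hf.comp measurable_fst).add measurable_snd))
  have hslice : ∀ x,
      P.map Y (Prod.mk x ⁻¹' T) = D.indicator (fun x => P.map Y (Ioi (c - f x))) x := by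
    intro x
    by_cases hx : x ∈ D
    · rw [indicator_of_mem hx]
      congr 1
      ext y
      simp [T, hx, sub_lt_iff_lt_add']
    · simp [T, hx]
  change P ((fun ω => (W ω, Y ω)) ⁻¹' T) = _
  rw [← Measure.map_apply (hW.prodMk hY) hT,
    (indepFun_iff_map_prod_eq_prod_map_map hW.aemeasurable hY.aemeasurable).1 hWY,
    Measure.prod_apply hT, lintegral_congr hslice, lintegral_indicator hD]

lemma measure_mem_lt_add_le (hW : Measurable W) (hY : Measurable Y)
    (hWY : IndepFun W Y P) (hf : Measurable f) (hD : MeasurableSet D) {lam s t : ℝ}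
    (hhaz : HazardRateGE (P.map Y) lam) (hst : s ≤ t) (hfD : ∀ x ∈ D, f x ≤ s) :
    P {ω | W ω ∈ D ∧ t < f (W ω) + Y ω}
      ≤ ENNReal.ofReal (Real.exp (-lam * (t - s))) * P {ω | W ω ∈ D ∧ s < f (W ω) + Y ω} := by
  rw [measure_mem_lt_add_eq_lintegral hW hY hWY hf hD,
    measure_mem_lt_add_eq_lintegral hW hY hWY hf hD,
    ← lintegral_const_mul' _ _ ENNReal.ofReal_ne_top]
  refine setLIntegral_mono' hD fun x hx => ?_
  have := hhaz (s - f x) (t - s) (by linarith [hfD x hx]) (by linarith)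
  rwa [sub_add_sub_cancel'] at this

end Independence

lemma sum_range_indicator_Iio {M : Type*} [AddCommMonoid M] (x : ℕ → M) {m n : ℕ} (h : m ≤ n) :
    ∑ i ∈ range m, (Set.Iio n).indicator x i = ∑ i ∈ range m, x i :=
  sum_congr rfl fun _ hi => indicator_of_mem (Set.mem_Iio.2 (lt_of_lt_of_le (mem_range.1 hi) h)) x

lemma monotone_sum_range {M : Type*} [AddCommMonoid M] [PartialOrder M] [IsOrderedAddMonoid M]
    {x : ℕ → M} (hx : ∀ i, 0 ≤ x i) :
    Monotone fun n => ∑ i ∈ range n, x i :=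
  fun _ _ h => sum_le_sum_of_subset_of_nonneg (range_subset_range.2 h) fun i _ _ => hx i

section Order

variable {α : Type*}

lemma exists_le_lt_succ [LinearOrder α] {a : ℕ → α} {c : α} (h0 : a 0 ≤ c)
    (h : ∃ m, c < a m) : ∃ n, a n ≤ c ∧ c < a (n + 1) := by
  classical
  have hne : Nat.find h ≠ 0 := fun h' => (Nat.find_spec h).not_ge (h' ▸ h0)
  obtain ⟨n, hn⟩ := Nat.exists_eq_add_one_of_ne_zero hne
  refine ⟨n, not_lt.1 (Nat.find_min h (by omega)), ?_⟩
  rw [← hn]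
  exact Nat.find_spec h

lemma Monotone.eq_of_le_lt_succ [Preorder α] {a : ℕ → α} (ha : Monotone a) {c : α}
    {n n' : ℕ} (h : a n ≤ c ∧ c < a (n + 1)) (h' : a n' ≤ c ∧ c < a (n' + 1)) : n = n' := by
  by_contra hne
  rcases Nat.lt_or_gt_of_ne hne with hlt | hlt
  · exact (ha hlt).not_gt (h'.1.trans_lt h.2)
  · exact (ha hlt).not_gt (h.1.trans_lt h'.2)

lemma le_of_lt_of_chain [Preorder α] {s t : ℕ → α} {k : ℕ} (hst : ∀ j < k, s j ≤ t j)
    (hts : ∀ j, j + 1 < k → t j ≤ s (j + 1)) {i j : ℕ} (hij : i < j) (hjk : j < k) :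
    t i ≤ s j := by
  induction j with
  | zero => omega
  | succ j ih =>
    rcases Nat.lt_succ_iff_lt_or_eq.1 hij with h | rfl
    · exact (ih h (by omega)).trans ((hst j (by omega)).trans (hts j hjk))
    · exact hts i hjk

lemma le_of_chain [Preorder α] {s t : ℕ → α} {k : ℕ} {c : α} (hs0 : c ≤ s 0)
    (hst : ∀ j < k, s j ≤ t j) (hts : ∀ j, j + 1 < k → t j ≤ s (j + 1)) {j : ℕ} (hj : j < k) :
    c ≤ s j := by
  rcases Nat.eq_zero_or_pos j with rfl | hpos
  · exact hs0
  · exact hs0.trans ((hst 0 (by omega)).trans (le_of_lt_of_chain hst hts hpos hj))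

variable [LinearOrder α] [NoMaxOrder α] {a : ℕ → α} {s t : α}

lemma natCard_lt_natCard_of_mem_Ioc (ha : Tendsto a atTop atTop) {m : ℕ} (hm : 1 ≤ m)
    (hmem : a m ∈ Ioc s t) :
    Nat.card {k // 1 ≤ k ∧ a k ≤ s} < Nat.card {k // 1 ≤ k ∧ a k ≤ t} := by
  change Nat.card {k | 1 ≤ k ∧ a k ≤ s} < Nat.card {k | 1 ≤ k ∧ a k ≤ t}
  rw [Nat.card_coe_set_eq, Nat.card_coe_set_eq]
  have hfin : {k | 1 ≤ k ∧ a k ≤ t}.Finite := by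
    have := ha.eventually_gt_atTop t
    rw [← Nat.cofinite_eq_atTop, eventually_cofinite] at this
    exact this.subset fun k hk => not_lt.2 hk.2
  have hsub : {k | 1 ≤ k ∧ a k ≤ s} ⊆ {k | 1 ≤ k ∧ a k ≤ t} :=
    fun k hk => ⟨hk.1, hk.2.trans (hmem.1.le.trans hmem.2)⟩
  exact ncard_lt_ncard ((Set.ssubset_iff_of_subset hsub).2
    ⟨m, ⟨hm, hmem.2⟩, fun h => h.2.not_gt hmem.1⟩) hfin

lemma notMem_Ioc_of_natCard_le (ha : Tendsto a atTop atTop) (h0 : a 0 ≤ s)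
    (hcard : Nat.card {k // 1 ≤ k ∧ a k ≤ t} ≤ Nat.card {k // 1 ≤ k ∧ a k ≤ s}) (m : ℕ) :
    a m ∉ Ioc s t := by
  intro hmem
  rcases m with _ | m
  · exact h0.not_gt hmem.1
  · exact (natCard_lt_natCard_of_mem_Ioc ha m.succ_pos hmem).not_ge hcard

end Order

section Walk

variable {Ω : Type*} {V : ℕ → Ω → ℝ}

/-- The clause `∃ m, …` guarantees a first passage above each `s j`; it holds almost surely
because the walk tends to infinity. -/
def skipsIntervals (V : ℕ → Ω → ℝ) (s t : ℕ → ℝ) (k : ℕ) : Set Ω :=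
  {ω | (∀ m, ∀ j < k, ∑ i ∈ range m, V i ω ∉ Ioc (s j) (t j)) ∧
    ∃ m, ∀ j < k, t j < ∑ i ∈ range m, V i ω}

def skipsUpTo (s t : ℕ → ℝ) (k n : ℕ) : Set (ℕ → ℝ) :=
  {x | ∑ i ∈ range n, x i ≤ s k ∧ ∀ m ≤ n, ∀ j < k, ∑ i ∈ range m, x i ∉ Ioc (s j) (t j)}

lemma indicator_Iio_mem_skipsUpTo {s t : ℕ → ℝ} {k n : ℕ} {x : ℕ → ℝ} :
    (Set.Iio n).indicator x ∈ skipsUpTo s t k n ↔ x ∈ skipsUpTo s t k n := by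
  have hsum := fun m (hm : m ≤ n) => sum_range_indicator_Iio x hm
  simp only [skipsUpTo, mem_ofPred_eq, hsum n le_rfl]
  exact and_congr_right' (forall₂_congr fun m hm => by rw [hsum m hm])

def passageAt (V : ℕ → Ω → ℝ) (s t : ℕ → ℝ) (k n : ℕ) (c : ℝ) : Set Ω :=
  {ω | (fun i => V i ω) ∈ skipsUpTo s t k n ∧ c < ∑ i ∈ range (n + 1), V i ω}

/-- Exhibits `passageAt` as an event about the first `n` steps, which are independent of step `n`,
together with the position at time `n + 1`. -/
lemma passageAt_eq_preimage (V : ℕ → Ω → ℝ) (s t : ℕ → ℝ) (k n : ℕ) (c : ℝ) :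
    passageAt V s t k n c = {ω | (Set.Iio n).indicator (fun i => V i ω) ∈ skipsUpTo s t k n ∧
      c < ∑ i ∈ range (n + 1), V i ω} :=
  ext fun _ => and_congr_left' indicator_Iio_mem_skipsUpTo.symm

lemma mem_skipsIntervals_of_natCard_le {ω : Ω}
    (hω : Tendsto (fun n => ∑ i ∈ range n, V i ω) atTop atTop) {s t : ℕ → ℝ} {k : ℕ}
    (hs : ∀ j < k, 0 ≤ s j)
    (hcard : ∀ j < k, Nat.card {m // 1 ≤ m ∧ ∑ i ∈ range m, V i ω ≤ t j} ≤
      Nat.card {m // 1 ≤ m ∧ ∑ i ∈ range m, V i ω ≤ s j}) :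
    ω ∈ skipsIntervals V s t k :=
  ⟨fun m j hj => notMem_Ioc_of_natCard_le hω (by simpa using hs j hj) (hcard j hj) m,
    ((eventually_all_finset (range k)).2 fun j _ => hω.eventually_gt_atTop (t j)).exists.imp
      fun _ hm j hj => hm j (mem_range.2 hj)⟩

lemma skipsIntervals_succ_subset {s t : ℕ → ℝ} {k : ℕ} (hs : 0 ≤ s k) (hst : s k ≤ t k) :
    skipsIntervals V s t (k + 1) ⊆ ⋃ n, passageAt V s t k n (t k) := by
  rintro ω ⟨hskip, m, hm⟩
  obtain ⟨n, hn, hn1⟩ := exists_le_lt_succ (a := fun n => ∑ i ∈ range n, V i ω)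
    (by simpa using hs) ⟨m, hst.trans_lt (hm k k.lt_succ_self)⟩
  have htk : t k < ∑ i ∈ range (n + 1), V i ω := by
    by_contra h
    exact hskip (n + 1) k k.lt_succ_self ⟨hn1, not_lt.1 h⟩
  exact mem_iUnion.2 ⟨n, ⟨hn, fun m _ j hj => hskip m j (Nat.lt_succ_of_lt hj)⟩, htk⟩

lemma iUnion_passageAt_subset (hnonneg : ∀ i ω, 0 ≤ V i ω) {s t : ℕ → ℝ} {k : ℕ}
    (hsep : ∀ j < k, t j ≤ s k) :
    ⋃ n, passageAt V s t k n (s k) ⊆ skipsIntervals V s t k := by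
  refine iUnion_subset fun n ω ⟨⟨_, hskip⟩, hjump⟩ => ⟨fun m j hj hmj => ?_, n + 1,
    fun j hj => (hsep j hj).trans_lt hjump⟩
  rcases le_or_gt m n with hmn | hnm
  · exact hskip m hmn j hj hmj
  · exact (hsep j hj).not_gt
      (hjump.trans_le ((monotone_sum_range (hnonneg · ω) hnm).trans hmj.2))

lemma pairwise_disjoint_passageAt (hnonneg : ∀ i ω, 0 ≤ V i ω) (s t : ℕ → ℝ) (k : ℕ) :
    Pairwise (Function.onFun Disjoint fun n => passageAt V s t k n (s k)) :=
  fun _ _ hne => Set.disjoint_left.2 fun ω h h' => hne <|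
    (monotone_sum_range (hnonneg · ω)).eq_of_le_lt_succ ⟨h.1.1, h.2⟩ ⟨h'.1.1, h'.2⟩

variable [MeasurableSpace Ω] {P : Measure Ω} {lam : ℝ}

lemma measurable_indicator_Iio (hmeas : ∀ i, Measurable (V i)) (n : ℕ) :
    Measurable fun ω => (Set.Iio n).indicator (fun i => V i ω) := by
  refine measurable_pi_lambda _ fun i => ?_
  by_cases hi : i < n
  · simpa [indicator, hi] using hmeas i
  · simp [indicator, hi]

lemma ProbabilityTheory.iIndepFun.indepFun_indicator_Iio (hindep : iIndepFun V P)
    (hmeas : ∀ i, Measurable (V i)) (n : ℕ) :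
    IndepFun (fun ω => (Set.Iio n).indicator (fun i => V i ω)) (V n) P := by
  have h := (hindep.indepFun_finset (range n) {n} (by simp) hmeas).comp
    (φ := fun x i => if hi : i ∈ range n then x ⟨i, hi⟩ else 0)
    (ψ := fun x => x ⟨n, mem_singleton_self n⟩)
    (measurable_pi_lambda _ fun i => by
      by_cases hi : i ∈ range n
      · simpa [hi] using measurable_pi_apply _
      · simp [hi])
    (measurable_pi_apply _ :
      Measurable fun x : ({n} : Finset ℕ) → ℝ => x ⟨n, mem_singleton_self n⟩)
  convert h using 1
  · ext ω i
    by_cases hi : i < n <;> simp [indicator, hi]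
  · rfl

lemma measure_lt_sum_range_succ_le [IsFiniteMeasure P] (hmeas : ∀ i, Measurable (V i))
    (hindep : iIndepFun V P) (hident : ∀ i, IdentDistrib (V i) (V 0) P P)
    (hhaz : HazardRateGE (P.map (V 0)) lam) {n : ℕ} {D : Set (ℕ → ℝ)} (hD : MeasurableSet D)
    {s t : ℝ} (hst : s ≤ t) (hDs : ∀ x ∈ D, ∑ i ∈ range n, x i ≤ s) :
    P {ω | (Set.Iio n).indicator (fun i => V i ω) ∈ D ∧ t < ∑ i ∈ range (n + 1), V i ω}
      ≤ ENNReal.ofReal (Real.exp (-lam * (t - s))) *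
        P {ω | (Set.Iio n).indicator (fun i => V i ω) ∈ D ∧ s < ∑ i ∈ range (n + 1), V i ω} := by
  simp_rw [sum_range_succ, ← sum_range_indicator_Iio (fun i => V i _) le_rfl]
  exact measure_mem_lt_add_le (measurable_indicator_Iio hmeas n) (hmeas n)
    (hindep.indepFun_indicator_Iio hmeas n)
    (Finset.measurable_sum _ fun i _ => measurable_pi_apply i) hD ((hident n).map_eq ▸ hhaz)
    hst hDs

lemma measurableSet_skipsUpTo (s t : ℕ → ℝ) (k n : ℕ) : MeasurableSet (skipsUpTo s t k n) := by
  unfold skipsUpTo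
  measurability

lemma measurableSet_passageAt (hmeas : ∀ i, Measurable (V i)) (s t : ℕ → ℝ) (k n : ℕ) (c : ℝ) :
    MeasurableSet (passageAt V s t k n c) := by
  rw [passageAt_eq_preimage]
  exact (measurable_indicator_Iio hmeas n (measurableSet_skipsUpTo s t k n)).inter
    (measurableSet_lt measurable_const (Finset.measurable_sum _ fun i _ => hmeas i))

lemma measure_passageAt_le [IsFiniteMeasure P] (hmeas : ∀ i, Measurable (V i))
    (hindep : iIndepFun V P) (hident : ∀ i, IdentDistrib (V i) (V 0) P P)
    (hhaz : HazardRateGE (P.map (V 0)) lam) {s t : ℕ → ℝ} {k : ℕ} (hst : s k ≤ t k) (n : ℕ) :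
    P (passageAt V s t k n (t k))
      ≤ ENNReal.ofReal (Real.exp (-lam * (t k - s k))) * P (passageAt V s t k n (s k)) := by
  rw [passageAt_eq_preimage, passageAt_eq_preimage]
  exact measure_lt_sum_range_succ_le hmeas hindep hident hhaz (measurableSet_skipsUpTo s t k n)
    hst fun _ hx => hx.1

lemma measure_skipsIntervals_succ_le [IsFiniteMeasure P] (hmeas : ∀ i, Measurable (V i))
    (hnonneg : ∀ i ω, 0 ≤ V i ω) (hindep : iIndepFun V P)
    (hident : ∀ i, IdentDistrib (V i) (V 0) P P) (hhaz : HazardRateGE (P.map (V 0)) lam)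
    {s t : ℕ → ℝ} {k : ℕ} (hs : 0 ≤ s k) (hst : s k ≤ t k) (hsep : ∀ j < k, t j ≤ s k) :
    P (skipsIntervals V s t (k + 1))
      ≤ ENNReal.ofReal (Real.exp (-lam * (t k - s k))) * P (skipsIntervals V s t k) :=
  calc P (skipsIntervals V s t (k + 1))
      ≤ ∑' n, P (passageAt V s t k n (t k)) :=
        (measure_mono (skipsIntervals_succ_subset hs hst)).trans (measure_iUnion_le _)
    _ ≤ ∑' n, ENNReal.ofReal (Real.exp (-lam * (t k - s k))) * P (passageAt V s t k n (s k)) :=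
        ENNReal.tsum_le_tsum (measure_passageAt_le hmeas hindep hident hhaz hst)
    _ = ENNReal.ofReal (Real.exp (-lam * (t k - s k))) * P (⋃ n, passageAt V s t k n (s k)) := by
        rw [ENNReal.tsum_mul_left, measure_iUnion (pairwise_disjoint_passageAt hnonneg s t k)
          fun n => measurableSet_passageAt hmeas s t k n _]
    _ ≤ _ := by grw [iUnion_passageAt_subset hnonneg hsep]

lemma measure_skipsIntervals_le [IsProbabilityMeasure P] (hmeas : ∀ i, Measurable (V i))
    (hnonneg : ∀ i ω, 0 ≤ V i ω) (hindep : iIndepFun V P)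
    (hident : ∀ i, IdentDistrib (V i) (V 0) P P) (hhaz : HazardRateGE (P.map (V 0)) lam)
    {s t : ℕ → ℝ} {k : ℕ} (hs0 : 0 ≤ s 0) (hst : ∀ j < k, s j ≤ t j)
    (hts : ∀ j, j + 1 < k → t j ≤ s (j + 1)) :
    P (skipsIntervals V s t k) ≤ ENNReal.ofReal (Real.exp (-lam * ∑ j ∈ range k, (t j - s j))) := by
  induction k with
  | zero => simpa using prob_le_one
  | succ k ih =>
    calc P (skipsIntervals V s t (k + 1))
        ≤ ENNReal.ofReal (Real.exp (-lam * (t k - s k))) * P (skipsIntervals V s t k) :=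
          measure_skipsIntervals_succ_le hmeas hnonneg hindep hident hhaz
            (le_of_chain hs0 hst hts k.lt_succ_self) (hst k k.lt_succ_self)
            fun j hj => le_of_lt_of_chain hst hts hj k.lt_succ_self
      _ ≤ ENNReal.ofReal (Real.exp (-lam * (t k - s k))) *
            ENNReal.ofReal (Real.exp (-lam * ∑ j ∈ range k, (t j - s j))) := by
          gcongr
          exact ih (fun j hj => hst j (by omega)) fun j hj => hts j (by omega)
      _ = _ := by
          rw [← ENNReal.ofReal_mul (Real.exp_pos _).le, ← Real.exp_add, sum_range_succ]
          ring_nf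

lemma ae_tendsto_sum_range_atTop [IsProbabilityMeasure P] (hmeas : ∀ i, Measurable (V i))
    (hnonneg : ∀ i ω, 0 ≤ V i ω) (hindep : iIndepFun V P)
    (hident : ∀ i, IdentDistrib (V i) (V 0) P P) (hpos : P {ω | 0 < V 0 ω} ≠ 0) :
    ∀ᵐ ω ∂P, Tendsto (fun n => ∑ i ∈ range n, V i ω) atTop atTop := by
  obtain ⟨ε, hε, hpε⟩ : ∃ ε > 0, P {ω | ε < V 0 ω} ≠ 0 := by
    by_contra! h
    refine hpos (measure_mono_null (fun ω (hω : 0 < V 0 ω) => ?_)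
      (measure_iUnion_null fun n : ℕ => h (1 / (n + 1)) Nat.one_div_pos_of_nat))
    obtain ⟨n, hn⟩ := exists_nat_one_div_lt hω
    exact mem_iUnion.2 ⟨n, hn⟩
  have hfreq : ∀ᵐ ω ∂P, ∃ᶠ i in atTop, ε < V i ω := by
    have hA : ∀ i, MeasurableSet {ω | ε < V i ω} := fun i => hmeas i measurableSet_Ioi
    have hlimsup := measure_limsup_eq_one hA
      ((iIndepSet_iff_meas_biInter hA).2 fun S =>
        hindep.measure_inter_preimage_eq_mul S fun _ _ => measurableSet_Ioi)
      (by
        change ∑' i, P (V i ⁻¹' Ioi ε) = ⊤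
        simp_rw [(hident _).measure_mem_eq measurableSet_Ioi]
        exact ENNReal.tsum_const_eq_top_of_ne_zero hpε)
    rw [← measure_univ (μ := P), ← ae_mem_iff_measure_eq
      (MeasurableSet.measurableSet_limsup hA).nullMeasurableSet] at hlimsup
    exact hlimsup.mono fun ω hω => mem_limsup_iff_frequently_mem.1 hω
  filter_upwards [hfreq] with ω hω
  rw [← not_summable_iff_tendsto_nat_atTop_of_nonneg (hnonneg · ω)]
  exact fun hsum => hω ((hsum.tendsto_atTop_zero.eventually (gt_mem_nhds hε)).mono
    fun i hi => hi.not_gt)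

end Walk

theorem renewal_no_jump_exponential_bound_general
    {Ω : Type*} [MeasurableSpace Ω] (P : Measure Ω) [IsProbabilityMeasure P]
    (U : ℕ → Ω → ℝ)
    (hUmeas : ∀ m, Measurable (U m))
    (hUnonneg : ∀ m ω, 0 ≤ U m ω)
    (hUindep : iIndepFun (fun m => U (m + 1)) P)
    (hUident : ∀ m, IdentDistrib (U (m + 1)) (U 1) P P)
    (S : ℕ → Ω → ℝ) (hS : ∀ k ω, S k ω = ∑ i ∈ Finset.range k, U (i + 1) ω)
    (L : ℝ → Ω → ℕ) (hL : ∀ t ω, L t ω = Nat.card {k : ℕ // 1 ≤ k ∧ S k ω ≤ t})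
    (r : ℝ → ℝ)
    (lam : ℝ) (hrlam : ∀ s, 0 ≤ s → lam ≤ r s)
    (hGdist : ∀ t : ℝ, 0 ≤ t →
      P {ω | t < U 1 ω} = expNegE (∫⁻ s in Set.Ioc (0 : ℝ) t, ENNReal.ofReal (r s)))
    (k : ℕ) (hk : 1 ≤ k) (s t : Fin k → ℝ)
    (hs0 : 0 ≤ s ⟨0, hk⟩)
    (hst : ∀ j, s j ≤ t j)
    (hts : ∀ j : Fin k, ∀ h : (j : ℕ) + 1 < k, t j ≤ s ⟨(j : ℕ) + 1, h⟩) :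
    P {ω | ∀ j, L (t j) ω - L (s j) ω = 0} ≤
      ENNReal.ofReal (Real.exp (-lam * ∑ j, (t j - s j))) := by
  set s' : ℕ → ℝ := fun j => if h : j < k then s ⟨j, h⟩ else 0
  set t' : ℕ → ℝ := fun j => if h : j < k then t ⟨j, h⟩ else 0
  have hs0' : 0 ≤ s' 0 := by rwa [show s' 0 = s ⟨0, hk⟩ from dif_pos hk]
  have hst' : ∀ j < k, s' j ≤ t' j := fun j hj => by
    simpa only [s', t', dif_pos hj] using hst _
  have hts' : ∀ j, j + 1 < k → t' j ≤ s' (j + 1) := fun j hj => by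
    simpa only [s', t', dif_pos hj, dif_pos (by omega : j < k)] using hts ⟨j, by omega⟩ hj
  have hhaz : HazardRateGE (P.map (U 1)) lam := hazardRateGE_of_survival
    (fun t ht => by rw [Measure.map_apply (hUmeas 1) measurableSet_Ioi]; exact hGdist t ht) hrlam
  have hpos : P {ω | 0 < U 1 ω} ≠ 0 := by simp [hGdist 0 le_rfl, expNegE_zero]
  have hwalk := ae_tendsto_sum_range_atTop (V := fun m => U (m + 1)) (fun _ => hUmeas _)
    (fun _ => hUnonneg _) hUindep hUident hpos
  have hsub : {ω | ∀ j, L (t j) ω - L (s j) ω = 0} ≤ᵐ[P]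
      skipsIntervals (fun m => U (m + 1)) s' t' k := by
    filter_upwards [hwalk] with ω hω hL0
    exact mem_skipsIntervals_of_natCard_le hω (fun j => le_of_chain hs0' hst' hts') fun j hj => by
      simpa [hL, hS, s', t', hj, Nat.sub_eq_zero_iff_le] using hL0 ⟨j, hj⟩
  calc P {ω | ∀ j, L (t j) ω - L (s j) ω = 0}
      ≤ P (skipsIntervals (fun m => U (m + 1)) s' t' k) := measure_mono_ae hsub
    _ ≤ ENNReal.ofReal (Real.exp (-lam * ∑ j ∈ range k, (t' j - s' j))) :=
        measure_skipsIntervals_le (fun _ => hUmeas _) (fun _ => hUnonneg _) hUindep hUident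
          hhaz hs0' hst' hts'
    _ = ENNReal.ofReal (Real.exp (-lam * ∑ j, (t j - s j))) := by
        rw [← Fin.sum_univ_eq_sum_range]
        simp [s', t']

/-- If the interarrival distribution has a failure rate function `r ≥ λ > 0`
(hypothesis (G)), then for `0 ≤ s₁ ≤ t₁ ≤ s₂ ≤ ⋯ ≤ s_k ≤ t_k`,
`P{L(t_j) - L(s_j) = 0, j = 1,…,k} ≤ exp(-λ Σ_j (t_j - s_j))`. -/
theorem renewal_no_jump_exponential_bound
    {Ω : Type*} [MeasurableSpace Ω] (P : Measure Ω) [IsProbabilityMeasure P]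
    (U : ℕ → Ω → ℝ)
    (hUmeas : ∀ m, Measurable (U m))
    (hUnonneg : ∀ m ω, 0 ≤ U m ω)
    (hUindep : iIndepFun (fun m => U (m + 1)) P)
    (hUident : ∀ m, IdentDistrib (U (m + 1)) (U 1) P P)
    (S : ℕ → Ω → ℝ) (hS : ∀ k ω, S k ω = ∑ i ∈ Finset.range k, U (i + 1) ω)
    (L : ℝ → Ω → ℕ) (hL : ∀ t ω, L t ω = Nat.card {k : ℕ // 1 ≤ k ∧ S k ω ≤ t})
    (r : ℝ → ℝ) (hrmeas : Measurable r) (hrnonneg : ∀ s, 0 ≤ s → 0 ≤ r s)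
    (lam : ℝ) (hlam : 0 < lam) (hrlam : ∀ s, 0 ≤ s → lam ≤ r s)
    (hrdiv : ∫⁻ s in Set.Ioi (0 : ℝ), ENNReal.ofReal (r s) = ⊤)
    (hGdist : ∀ t : ℝ, 0 ≤ t →
      P {ω | t < U 1 ω} = expNegE (∫⁻ s in Set.Ioc (0 : ℝ) t, ENNReal.ofReal (r s)))
    (k : ℕ) (hk : 1 ≤ k) (s t : Fin k → ℝ)
    (hs0 : 0 ≤ s ⟨0, hk⟩)
    (hst : ∀ j, s j ≤ t j)
    (hts : ∀ j : Fin k, ∀ h : (j : ℕ) + 1 < k, t j ≤ s ⟨(j : ℕ) + 1, h⟩) :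
    P {ω | ∀ j, L (t j) ω - L (s j) ω = 0} ≤
      ENNReal.ofReal (Real.exp (-lam * ∑ j, (t j - s j))) :=
  renewal_no_jump_exponential_bound_general P U hUmeas hUnonneg hUindep hUident S hS L hL r lam
    hrlam hGdist k hk s t hs0 hst hts
end

section
/- For any real numbers 0 ≤ s ≤ t and any m, n ∈ ℕ₀ with m ≤ ⌊s⌋ and n ≤ ⌊t⌋ − ⌊s⌋, we have ℙ{L(s) = m, L(t) − L(s) = n} = C(⌊s⌋, m) · C(⌊t⌋ − ⌊s⌋, n) · q^{⌊t⌋} · (p/q)^{m+n}, where C(a,b) denotes the binomial coefficient and ⌊·⌋ the integer part. -/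
/-!
Let `R_c ⊆ {1, …, c}` be the set of renewal epochs up to `c`. Almost surely every `U_k ≥ 1`, so
`k ↦ S_k` is strictly increasing, and then `L(s) = #(R_c ∩ [1, ⌊s⌋])` and `L(t) = #R_c` for
`c = ⌊t⌋`. The renewal set is a Bernoulli process: `P(R_c = A) = p ^ #A * q ^ (c - #A)`.
Indeed, if `x = min A`, then `R_c = A` exactly when `U_1 = x` and the renewal set up to `c - x` of
the shifted sequence `(U_2, U_3, …)` is `A` translated by `-x`; the shifted sequence is independent
of `U_1` and again i.i.d. geometric, so strong induction on `c` applies. Summing over the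
`C(⌊s⌋, m) * C(⌊t⌋ - ⌊s⌋, n)` sets with `m` points in `[1, ⌊s⌋]` and `n` points in `(⌊s⌋, ⌊t⌋]`
gives the formula.
-/

open MeasureTheory ProbabilityTheory Set

lemma Finset.eq_and_eq_of_insert_eq_insert {α : Type*} [LinearOrder α] {a b : α}
    {s t : Finset α} (hs : ∀ y ∈ s, a < y) (ht : ∀ y ∈ t, b < y)
    (h : insert a s = insert b t) : a = b ∧ s = t := by
  have hab : a = b := by
    by_contra hne
    have ha : a ∈ insert b t := h ▸ Finset.mem_insert_self a s
    have hb : b ∈ insert a s := h ▸ Finset.mem_insert_self b t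
    exact (hs b ((Finset.mem_insert.1 hb).resolve_left (Ne.symm hne))).not_gt
      (ht a ((Finset.mem_insert.1 ha).resolve_left hne))
  subst hab
  refine ⟨rfl, ?_⟩
  rw [← Finset.erase_insert fun ha => (hs a ha).false, h,
    Finset.erase_insert fun ha => (ht a ha).false]

open Finset in
lemma Finset.card_filter_powerset_card_inter_card_sdiff {α : Type*} [DecidableEq α]
    {X Z : Finset α} (h : X ⊆ Z) (m n : ℕ) :
    #{A ∈ Z.powerset | #(A ∩ X) = m ∧ #(A \ X) = n} = (#X).choose m * (#(Z \ X)).choose n := by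
  rw [← card_powersetCard, ← card_powersetCard, ← card_product]
  have hsplit : ∀ {B C : Finset α}, B ⊆ X → C ⊆ Z \ X → (B ∪ C) ∩ X = B ∧ (B ∪ C) \ X = C := by
    intro B C hB hC
    have hCX : Disjoint C X := disjoint_of_subset_left hC sdiff_disjoint
    rw [union_inter_distrib_right, inter_eq_left.2 hB, disjoint_iff_inter_eq_empty.1 hCX,
      union_empty, union_sdiff_distrib, sdiff_eq_empty_iff_subset.2 hB, hCX.sdiff_eq_left,
      empty_union]
    exact ⟨rfl, rfl⟩
  refine card_nbij' (fun A => (A ∩ X, A \ X)) (fun BC => BC.1 ∪ BC.2) ?_ ?_ ?_ ?_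
  · intro A hA
    simp only [coe_filter, Finset.mem_powerset, Set.mem_ofPred_eq] at hA
    simp only [coe_product, Set.mem_prod, mem_coe, mem_powersetCard]
    exact ⟨⟨inter_subset_right, hA.2.1⟩, sdiff_subset_sdiff hA.1 le_rfl, hA.2.2⟩
  · rintro ⟨B, C⟩ hBC
    simp only [coe_product, Set.mem_prod, mem_coe, mem_powersetCard] at hBC
    obtain ⟨⟨hBX, hBm⟩, hCZ, hCn⟩ := hBC
    simp only [coe_filter, Finset.mem_powerset, Set.mem_ofPred_eq, hsplit hBX hCZ]
    exact ⟨union_subset (hBX.trans h) (hCZ.trans sdiff_subset), hBm, hCn⟩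
  · intro A _
    exact (union_comm _ _).trans (sdiff_union_inter A X)
  · rintro ⟨B, C⟩ hBC
    simp only [coe_product, Set.mem_prod, mem_coe, mem_powersetCard] at hBC
    simp [hsplit hBC.1.1 hBC.2.1]

lemma ProbabilityTheory.iIndepFun.indepFun_head_tail {Ω β : Type*} [MeasurableSpace Ω]
    [MeasurableSpace β] {P : Measure Ω} {V : ℕ → Ω → β} (hV : ∀ i, Measurable (V i))
    (h : iIndepFun V P) : IndepFun (V 0) (fun ω i => V (i + 1) ω) P := by
  let m : ℕ → MeasurableSpace Ω := fun i => MeasurableSpace.comap (V i) inferInstance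
  have hind := indep_iSup_of_disjoint (fun i => (hV i).comap_le) h.iIndep
    (S := {0}) (T := {i | 1 ≤ i}) (by simp)
  rw [IndepFun_iff_Indep]
  refine indep_of_indep_of_le_right (indep_of_indep_of_le_left hind ?_) ?_
  · exact le_iSup₂ (f := fun i (_ : i ∈ ({0} : Set ℕ)) => m i) 0 rfl
  · rw [MeasurableSpace.pi, MeasurableSpace.comap_iSup]
    refine iSup_le fun i => ?_
    rw [MeasurableSpace.comap_comp]
    exact le_iSup₂ (f := fun i (_ : i ∈ {i : ℕ | 1 ≤ i}) => m i) (i + 1) (by simp)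

namespace GeomRenewal
open Finset

open Classical in
noncomputable def renewalsUpTo (u : ℕ → ℕ) (c : ℕ) : Finset ℕ :=
  {j ∈ Finset.Icc 1 c | ∃ k, ∑ i ∈ range k, u i = j}

variable {u : ℕ → ℕ} {a c j x : ℕ}

lemma mem_renewalsUpTo :
    j ∈ renewalsUpTo u c ↔ j ∈ Finset.Icc 1 c ∧ ∃ k, ∑ i ∈ range k, u i = j := by
  simp [renewalsUpTo]

lemma renewalsUpTo_subset : renewalsUpTo u c ⊆ Finset.Icc 1 c :=
  fun _ hj => (mem_renewalsUpTo.1 hj).1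

lemma renewalsUpTo_inter_Icc (h : a ≤ c) :
    renewalsUpTo u c ∩ Finset.Icc 1 a = renewalsUpTo u a := by
  ext j
  simp only [Finset.mem_inter, mem_renewalsUpTo, Finset.mem_Icc]
  constructor
  · rintro ⟨⟨-, hk⟩, hj⟩; exact ⟨hj, hk⟩
  · rintro ⟨hj, hk⟩; exact ⟨⟨⟨hj.1, hj.2.trans h⟩, hk⟩, hj⟩

lemma renewalsUpTo_eq_empty_of_lt (h : c < u 0) : renewalsUpTo u c = ∅ := by
  refine eq_empty_of_forall_notMem fun j hj => ?_
  obtain ⟨hj, k, rfl⟩ := mem_renewalsUpTo.1 hj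
  obtain _ | k := k
  · simp at hj
  · rw [sum_range_succ'] at hj
    have := (Finset.mem_Icc.1 hj).2
    omega

lemma renewalsUpTo_eq_insert (h0 : 1 ≤ u 0) (h : u 0 ≤ c) :
    renewalsUpTo u c =
      insert (u 0) ((renewalsUpTo (fun i => u (i + 1)) (c - u 0)).image (· + u 0)) := by
  ext j
  simp only [Finset.mem_insert, Finset.mem_image, mem_renewalsUpTo, Finset.mem_Icc]
  constructor
  · rintro ⟨hj, k, rfl⟩
    obtain _ | k := k
    · simp at hj
    rw [sum_range_succ'] at hj ⊢
    rcases Nat.eq_zero_or_pos (∑ i ∈ range k, u (i + 1)) with h1 | h1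
    · left; omega
    · right; exact ⟨_, ⟨by omega, k, rfl⟩, rfl⟩
  · rintro (rfl | ⟨i, ⟨hi, k, rfl⟩, rfl⟩)
    · exact ⟨⟨h0, h⟩, 1, by simp⟩
    · exact ⟨by omega, k + 1, by rw [sum_range_succ']⟩

lemma renewalsUpTo_eq_insert_iff (h0 : 1 ≤ u 0) (hxc : x ≤ c) {s : Finset ℕ}
    (hs : ∀ y ∈ s, x < y) :
    renewalsUpTo u c = insert x s ↔
      u 0 = x ∧ renewalsUpTo (fun i => u (i + 1)) (c - x) = s.image (· - x) := by
  constructor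
  · intro h
    have hu : u 0 ≤ c := by
      by_contra! hlt
      rw [renewalsUpTo_eq_empty_of_lt hlt] at h
      exact insert_ne_empty x s h.symm
    rw [renewalsUpTo_eq_insert h0 hu] at h
    have hpos : ∀ y ∈ (renewalsUpTo (fun i => u (i + 1)) (c - u 0)).image (· + u 0), u 0 < y := by
      simp only [Finset.mem_image, forall_exists_index, and_imp, forall_apply_eq_imp_iff₂]
      exact fun i hi => by have := (Finset.mem_Icc.1 (renewalsUpTo_subset hi)).1; omega
    obtain ⟨rfl, himage⟩ := eq_and_eq_of_insert_eq_insert hpos hs h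
    refine ⟨rfl, ?_⟩
    simp [← himage, Finset.image_image, Function.comp_def]
  · rintro ⟨rfl, h⟩
    rw [renewalsUpTo_eq_insert h0 hxc, h, Finset.image_image]
    congr
    exact (Finset.image_congr fun y hy => by simp [Nat.sub_add_cancel (hs y hy).le]).trans image_id

lemma measurableSet_renewalsUpTo_eq (c : ℕ) (A : Finset ℕ) :
    MeasurableSet {u : ℕ → ℕ | renewalsUpTo u c = A} := by
  simp only [Finset.ext_iff, mem_renewalsUpTo]
  measurability

lemma card_renewalsUpTo (hu : ∀ i, 1 ≤ u i) (r : ℝ) :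
    Nat.card {k : ℕ // 1 ≤ k ∧ ((∑ i ∈ range k, u i : ℕ) : ℝ) ≤ r} =
      #(renewalsUpTo u ⌊r⌋₊) := by
  set S : ℕ → ℕ := fun k => ∑ i ∈ range k, u i
  have hS : StrictMono S := strictMono_nat_of_lt_succ fun k => by
    simp only [S, sum_range_succ]; have := hu k; omega
  have himage : S '' {k | 1 ≤ k ∧ (S k : ℝ) ≤ r} = renewalsUpTo u ⌊r⌋₊ := by
    ext j
    simp only [Set.mem_image, Set.mem_ofPred_eq, Finset.mem_coe, mem_renewalsUpTo, Finset.mem_Icc]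
    constructor
    · rintro ⟨k, ⟨hk, hkr⟩, rfl⟩
      have h1 : 1 ≤ S k := hk.trans (hS.id_le k)
      exact ⟨⟨h1, (Nat.le_floor_iff' (Nat.one_le_iff_ne_zero.1 h1)).2 hkr⟩, k, rfl⟩
    · rintro ⟨⟨hj, hjr⟩, k, rfl⟩
      have hk : k ≠ 0 := by
        rintro rfl
        simp at hj
      exact ⟨k, ⟨Nat.one_le_iff_ne_zero.2 hk,
        (Nat.le_floor_iff' (Nat.one_le_iff_ne_zero.1 hj)).1 hjr⟩, rfl⟩
  rw [← Set.ncard_coe_finset, ← himage, Set.ncard_image_of_injective _ hS.injective]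
  exact (Nat.card_coe_set_eq _).symm

variable {Ω : Type*} [MeasurableSpace Ω] {P : Measure Ω} {p : ℝ}

lemma measure_lt_eq_of_geometric {X : Ω → ℕ} (hX : Measurable X) (hp : p ∈ Set.Ioo 0 1)
    (hlaw : ∀ k, 1 ≤ k → P {ω | X ω = k} = ENNReal.ofReal (p * (1 - p) ^ (k - 1))) (c : ℕ) :
    P {ω | c < X ω} = ENNReal.ofReal ((1 - p) ^ c) := by
  obtain ⟨hp0, hp1⟩ := hp
  have hunion : {ω | c < X ω} = ⋃ i : ℕ, {ω | X ω = c + 1 + i} := by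
    ext ω
    simp only [mem_ofPred_eq, mem_iUnion]
    exact ⟨fun h => ⟨X ω - (c + 1), by omega⟩, fun ⟨i, hi⟩ => by omega⟩
  have hdisj : Pairwise (Function.onFun Disjoint fun i : ℕ => {ω | X ω = c + 1 + i}) :=
    fun i j hij => disjoint_left.2 fun ω hi hj => hij (by simp_all)
  have htail : HasSum (fun i : ℕ => p * (1 - p) ^ (c + 1 + i - 1)) ((1 - p) ^ c) := by
    have hgeom := (hasSum_geometric_of_lt_one (r := 1 - p) (by linarith) (by linarith)).mul_left
      (p * (1 - p) ^ c)
    rw [sub_sub_cancel, mul_comm p, mul_assoc, mul_inv_cancel₀ hp0.ne', mul_one] at hgeom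
    have hterm : ∀ i, c + 1 + i - 1 = c + i := fun i => by omega
    simpa only [hterm, pow_add, mul_assoc, mul_left_comm p] using hgeom
  rw [hunion, measure_iUnion hdisj fun i => hX (measurableSet_singleton _),
    ← htail.tsum_eq, ENNReal.ofReal_tsum_of_nonneg (fun i => by positivity) htail.summable]
  exact tsum_congr fun i => hlaw _ (by omega)

structure IsIIDGeometric (V : ℕ → Ω → ℕ) (P : Measure Ω) (p : ℝ) : Prop where
  measurable : ∀ i, Measurable (V i)
  iIndepFun : iIndepFun V P
  measure_eq : ∀ i k, 1 ≤ k → P {ω | V i ω = k} = ENNReal.ofReal (p * (1 - p) ^ (k - 1))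

namespace IsIIDGeometric

variable {V : ℕ → Ω → ℕ}

lemma tail (hV : IsIIDGeometric V P p) : IsIIDGeometric (fun i => V (i + 1)) P p :=
  ⟨fun i => hV.measurable (i + 1), hV.iIndepFun.precomp (add_left_injective 1),
    fun i => hV.measure_eq (i + 1)⟩

lemma ae_one_le [IsProbabilityMeasure P] (hV : IsIIDGeometric V P p) (hp : p ∈ Set.Ioo 0 1) :
    ∀ᵐ ω ∂P, ∀ i, 1 ≤ V i ω :=
  ae_all_iff.2 fun i => (ae_iff_prob_eq_one (measurableSet_setOfPred.1 <|
    hV.measurable i measurableSet_Ici)).2 <| by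
      simpa [Nat.one_le_iff_ne_zero, Nat.pos_iff_ne_zero] using
        measure_lt_eq_of_geometric (hV.measurable i) hp (hV.measure_eq i) 0

lemma measure_renewalsUpTo_eq_empty [IsProbabilityMeasure P] (hV : IsIIDGeometric V P p)
    (hp : p ∈ Set.Ioo 0 1) (c : ℕ) :
    P {ω | renewalsUpTo (V · ω) c = ∅} = ENNReal.ofReal ((1 - p) ^ c) := by
  rw [← measure_lt_eq_of_geometric (hV.measurable 0) hp (hV.measure_eq 0) c]
  refine measure_congr ?_
  filter_upwards [hV.ae_one_le hp] with ω hω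
  refine propext ⟨fun h => ?_, renewalsUpTo_eq_empty_of_lt (u := (V · ω))⟩
  by_contra hle
  exact insert_ne_empty _ _ (h ▸ renewalsUpTo_eq_insert (hω 0) (not_lt.1 hle)).symm

lemma measure_renewalsUpTo_eq_insert [IsProbabilityMeasure P] (hV : IsIIDGeometric V P p)
    (hp : p ∈ Set.Ioo 0 1) {c x : ℕ} {s : Finset ℕ} (hxc : x ≤ c) (hs : ∀ y ∈ s, x < y) :
    P {ω | renewalsUpTo (V · ω) c = insert x s} = P {ω | V 0 ω = x} *
      P {ω | renewalsUpTo (fun i => V (i + 1) ω) (c - x) = s.image (· - x)} := by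
  have hsplit : {ω | renewalsUpTo (V · ω) c = insert x s} =ᵐ[P]
      ({ω | V 0 ω = x} ∩ {ω | renewalsUpTo (fun i => V (i + 1) ω) (c - x) = s.image (· - x)} :
        Set Ω) := by
    filter_upwards [hV.ae_one_le hp] with ω hω
    exact propext (renewalsUpTo_eq_insert_iff (u := (V · ω)) (hω 0) hxc hs)
  rw [measure_congr hsplit]
  exact (iIndepFun.indepFun_head_tail hV.measurable hV.iIndepFun).measure_inter_preimage_eq_mul
    _ _ (measurableSet_singleton x) (measurableSet_renewalsUpTo_eq _ _)

theorem measure_renewalsUpTo_eq [IsProbabilityMeasure P] (hV : IsIIDGeometric V P p)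
    (hp : p ∈ Set.Ioo 0 1) {c : ℕ} {A : Finset ℕ} (hA : A ⊆ Finset.Icc 1 c) :
    P {ω | renewalsUpTo (V · ω) c = A} = ENNReal.ofReal (p ^ #A * (1 - p) ^ (c - #A)) := by
  induction c using Nat.strong_induction_on generalizing V A with | _ c ih =>
  rcases A.eq_empty_or_nonempty with rfl | hne
  · simpa using hV.measure_renewalsUpTo_eq_empty hp c
  set x := A.min' hne
  set s := A.erase x
  have hAx : A = insert x s := (insert_erase (min'_mem A hne)).symm
  have hs : ∀ y ∈ s, x < y := fun y hy => min'_lt_of_mem_erase_min' A hne hy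
  obtain ⟨hx1, hxc⟩ := Finset.mem_Icc.1 (hA (min'_mem A hne))
  have hB : s.image (· - x) ⊆ Finset.Icc 1 (c - x) := by
    intro z hz
    obtain ⟨y, hy, rfl⟩ := Finset.mem_image.1 hz
    have := Finset.mem_Icc.1 (hA (mem_of_mem_erase hy))
    have := hs y hy
    exact Finset.mem_Icc.2 ⟨by omega, by omega⟩
  have hcardB : #(s.image (· - x)) = #s := card_image_of_injOn fun y hy z hz h => by
    have := hs y hy; have := hs z hz; omega
  have hsc : #s ≤ c - x := by simpa [hcardB] using Finset.card_le_card hB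
  have hq : 0 ≤ 1 - p := by linarith [hp.2]
  rw [hAx, hV.measure_renewalsUpTo_eq_insert hp hxc hs, hV.measure_eq 0 x hx1,
    ih (c - x) (by omega) hV.tail hB, hcardB, ← ENNReal.ofReal_mul (by have := hp.1; positivity),
    card_insert_of_notMem fun h => (hs x h).false]
  congr 1
  rw [show c - (#s + 1) = (x - 1) + (c - x - #s) by omega, pow_add, pow_succ]
  ring

lemma measure_renewalsUpTo_mem [IsProbabilityMeasure P] (hV : IsIIDGeometric V P p)
    (hp : p ∈ Set.Ioo 0 1) {c k : ℕ} {𝒜 : Finset (Finset ℕ)}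
    (h𝒜 : ∀ A ∈ 𝒜, A ⊆ Finset.Icc 1 c ∧ #A = k) :
    P {ω | renewalsUpTo (V · ω) c ∈ 𝒜} = #𝒜 * ENNReal.ofReal (p ^ k * (1 - p) ^ (c - k)) :=
  calc P {ω | renewalsUpTo (V · ω) c ∈ 𝒜}
      = ∑ A ∈ 𝒜, P {ω | renewalsUpTo (V · ω) c = A} := (sum_measure_preimage_singleton 𝒜
          fun A _ => measurable_pi_lambda _ hV.measurable (measurableSet_renewalsUpTo_eq c A)).symm
    _ = ∑ A ∈ 𝒜, ENNReal.ofReal (p ^ k * (1 - p) ^ (c - k)) := sum_congr rfl fun A hA => by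
          rw [hV.measure_renewalsUpTo_eq hp (h𝒜 A hA).1, (h𝒜 A hA).2]
    _ = _ := by rw [sum_const, nsmul_eq_mul]

theorem measure_card_inter_card_sdiff_eq [IsProbabilityMeasure P] (hV : IsIIDGeometric V P p)
    (hp : p ∈ Set.Ioo 0 1) {a c : ℕ} (hac : a ≤ c) (m n : ℕ) :
    P {ω | #(renewalsUpTo (V · ω) c ∩ Finset.Icc 1 a) = m ∧
        #(renewalsUpTo (V · ω) c \ Finset.Icc 1 a) = n} =
      (a.choose m * (c - a).choose n : ℕ) *
        ENNReal.ofReal (p ^ (m + n) * (1 - p) ^ (c - (m + n))) := by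
  have hcount := hV.measure_renewalsUpTo_mem hp (k := m + n)
    (𝒜 := {A ∈ (Finset.Icc 1 c).powerset | #(A ∩ Finset.Icc 1 a) = m ∧
      #(A \ Finset.Icc 1 a) = n}) fun A hA => by
    simp only [mem_filter, Finset.mem_powerset] at hA
    rw [← card_sdiff_add_card_inter A (Finset.Icc 1 a), hA.2.1, hA.2.2, add_comm n]
    exact ⟨hA.1, rfl⟩
  have hXZ := Finset.Icc_subset_Icc_right (a := 1) hac
  rw [card_filter_powerset_card_inter_card_sdiff hXZ, card_sdiff_of_subset hXZ, Nat.card_Icc,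
    Nat.card_Icc, Nat.add_sub_cancel, Nat.add_sub_cancel] at hcount
  rw [← hcount]
  congr 1
  ext ω
  simp [renewalsUpTo_subset]

end IsIIDGeometric

end GeomRenewal

open Finset GeomRenewal

theorem geom_renewal_joint_law_general
    {Ω : Type*} [MeasurableSpace Ω] (P : Measure Ω) [IsProbabilityMeasure P]
    (p q : ℝ) (hp : p ∈ Set.Ioo (0 : ℝ) 1) (hq : q = 1 - p)
    (U : ℕ → Ω → ℕ)
    (hUmeas : ∀ m, Measurable (U m))
    (hUindep : iIndepFun (fun m => U (m + 1)) P)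
    (hUgeom : ∀ m, 1 ≤ m → ∀ k, 1 ≤ k →
      P {ω | U m ω = k} = ENNReal.ofReal (p * q ^ (k - 1)))
    (S : ℕ → Ω → ℕ) (hS : ∀ k ω, S k ω = ∑ i ∈ Finset.range k, U (i + 1) ω)
    (L : ℝ → Ω → ℕ)
    (hL : ∀ t ω, L t ω = Nat.card {k : ℕ // 1 ≤ k ∧ (S k ω : ℝ) ≤ t})
    (s t : ℝ) (hst : s ≤ t)
    (m n : ℕ) (hm : m ≤ Nat.floor s) (hn : n ≤ Nat.floor t - Nat.floor s) :
    (P {ω | L s ω = m ∧ L t ω - L s ω = n}).toReal =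
      (Nat.choose (Nat.floor s) m : ℝ) * (Nat.choose (Nat.floor t - Nat.floor s) n : ℝ) *
        q ^ (Nat.floor t) * (p / q) ^ (m + n) := by
  subst hq
  set V : ℕ → Ω → ℕ := fun i => U (i + 1)
  have hV : IsIIDGeometric V P p :=
    ⟨fun i => hUmeas (i + 1), hUindep, fun i k hk => hUgeom (i + 1) (by omega) k hk⟩
  have hac : ⌊s⌋₊ ≤ ⌊t⌋₊ := Nat.floor_le_floor hst
  have hevent : {ω | L s ω = m ∧ L t ω - L s ω = n} =ᵐ[P]
      {ω | #(renewalsUpTo (V · ω) ⌊t⌋₊ ∩ Finset.Icc 1 ⌊s⌋₊) = m ∧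
        #(renewalsUpTo (V · ω) ⌊t⌋₊ \ Finset.Icc 1 ⌊s⌋₊) = n} := by
    filter_upwards [hV.ae_one_le hp] with ω hω
    have hLR : ∀ r, L r ω = #(renewalsUpTo (V · ω) ⌊r⌋₊) := fun r => by
      rw [hL, ← card_renewalsUpTo hω]
      simp only [hS, V]
    change (L s ω = m ∧ L t ω - L s ω = n) = (_ ∧ _)
    rw [hLR s, hLR t, ← renewalsUpTo_inter_Icc hac,
      ← card_sdiff_add_card_inter (renewalsUpTo _ ⌊t⌋₊) (Finset.Icc 1 ⌊s⌋₊), Nat.add_sub_cancel]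
  have hq : 0 < 1 - p := by linarith [hp.2]
  have hqt : (1 - p) ^ ⌊t⌋₊ = (1 - p) ^ (⌊t⌋₊ - (m + n)) * (1 - p) ^ (m + n) := by
    rw [← pow_add, Nat.sub_add_cancel (by omega)]
  rw [measure_congr hevent, hV.measure_card_inter_card_sdiff_eq hp hac, ENNReal.toReal_mul,
    ENNReal.toReal_natCast, ENNReal.toReal_ofReal (by have := hp.1; positivity), hqt, div_pow]
  field_simp
  push_cast
  ring

/-- For a renewal counting process `L` with i.i.d. geometric interarrival times of
parameter `p`, for `0 ≤ s ≤ t`, `m ≤ ⌊s⌋`, `n ≤ ⌊t⌋ - ⌊s⌋`: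
`P{L(s) = m, L(t) - L(s) = n} = C(⌊s⌋,m) C(⌊t⌋-⌊s⌋,n) q^⌊t⌋ (p/q)^{m+n}`. -/
theorem geom_renewal_joint_law
    {Ω : Type*} [MeasurableSpace Ω] (P : Measure Ω) [IsProbabilityMeasure P]
    (p q : ℝ) (hp : p ∈ Set.Ioo (0 : ℝ) 1) (hq : q = 1 - p)
    (U : ℕ → Ω → ℕ)
    (hUmeas : ∀ m, Measurable (U m))
    (hUindep : iIndepFun (fun m => U (m + 1)) P)
    (hUgeom : ∀ m, 1 ≤ m → ∀ k, 1 ≤ k →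
      P {ω | U m ω = k} = ENNReal.ofReal (p * q ^ (k - 1)))
    (S : ℕ → Ω → ℕ) (hS : ∀ k ω, S k ω = ∑ i ∈ Finset.range k, U (i + 1) ω)
    (L : ℝ → Ω → ℕ)
    (hL : ∀ t ω, L t ω = Nat.card {k : ℕ // 1 ≤ k ∧ (S k ω : ℝ) ≤ t})
    (s t : ℝ) (hs : 0 ≤ s) (hst : s ≤ t)
    (m n : ℕ) (hm : m ≤ Nat.floor s) (hn : n ≤ Nat.floor t - Nat.floor s) :
    (P {ω | L s ω = m ∧ L t ω - L s ω = n}).toReal =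
      (Nat.choose (Nat.floor s) m : ℝ) * (Nat.choose (Nat.floor t - Nat.floor s) n : ℝ) *
        q ^ (Nat.floor t) * (p / q) ^ (m + n) :=
  geom_renewal_joint_law_general P p q hp hq U hUmeas hUindep hUgeom S hS L hL s t hst m n hm hn
end

section
/- For all real numbers 0 ≤ s ≤ t, the random variables L(s) and L(t) − L(s) are independent; that is, for all m, n ∈ ℕ₀, ℙ{L(s) = m, L(t) − L(s) = n} = ℙ{L(s) = m} · ℙ{L(t) − L(s) = n}. -/
/-!
Let `b = ⌊t⌋`. The renewal epochs in `[1, b]` form a random subset `R` of `{1, …, b}`. For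
`x = {x₁ < ⋯ < x_r} ⊆ {1, …, b}` the event `R = x` is the cylinder event
`U₁ = x₁, U₂ = x₂ - x₁, …, U_r = x_r - x_{r-1}, U_{r+1} > b - x_r`, whose probability is
`p ^ r * q ^ (b - r)` by independence and the geometric tails. These events are disjoint and
their probabilities add up to `(p + q) ^ b = 1`, so they partition `Ω` up to a null set and `R`
is a Bernoulli(`p`) random subset of `{1, …, b}`. Finally `L(s)` and `L(t) - L(s)` count the
points of `R` in the disjoint blocks `[1, s]` and `(s, b]`, and the Bernoulli weights factor
over disjoint blocks.
-/

open Finset MeasureTheory ProbabilityTheory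
open scoped ENNReal

section BernoulliWeight
variable {α R : Type*} [DecidableEq α]

theorem Finset.sum_powerset_filter_mul_filter_not [CommSemiring R] (B : Finset α)
    (π : α → Prop) [DecidablePred π] (F G : Finset α → R) :
    ∑ x ∈ B.powerset, F {a ∈ x | π a} * G {a ∈ x | ¬π a} =
      (∑ y ∈ {a ∈ B | π a}.powerset, F y) * ∑ z ∈ {a ∈ B | ¬π a}.powerset, G z := by
  rw [sum_mul_sum, ← sum_product']
  refine sum_nbij' (fun x => ({a ∈ x | π a}, {a ∈ x | ¬π a})) (fun yz => yz.1 ∪ yz.2)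
    ?_ ?_ (fun x _ => filter_union_filter_not_eq π x) ?_ (fun _ _ => rfl)
  · intro x hx
    simp only [mem_product, mem_powerset] at hx ⊢
    exact ⟨filter_subset_filter _ hx, filter_subset_filter _ hx⟩
  · intro yz hyz
    simp only [mem_product, mem_powerset] at hyz ⊢
    exact union_subset (hyz.1.trans (filter_subset _ _)) (hyz.2.trans (filter_subset _ _))
  · rintro ⟨y, z⟩ hyz
    simp only [mem_product, mem_powerset, subset_iff, mem_filter] at hyz
    ext a <;> by_cases ha : π a <;> grind

def bernoulliWeight [CommSemiring R] (ρ κ : R) (B x : Finset α) : R := ρ ^ #x * κ ^ #(B \ x)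

variable [CommSemiring R] {ρ κ : R}

theorem sum_bernoulliWeight (B : Finset α) :
    ∑ x ∈ B.powerset, bernoulliWeight ρ κ B x = (ρ + κ) ^ #B := by
  rw [← sum_pow_mul_eq_add_pow]
  refine sum_congr rfl fun x hx => ?_
  rw [bernoulliWeight, card_sdiff_of_subset (mem_powerset.1 hx)]

theorem bernoulliWeight_eq_mul_filter_not (B x : Finset α) (π : α → Prop) [DecidablePred π] :
    bernoulliWeight ρ κ B x = bernoulliWeight ρ κ {a ∈ B | π a} {a ∈ x | π a} *
      bernoulliWeight ρ κ {a ∈ B | ¬π a} {a ∈ x | ¬π a} := by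
  have hsplit (y : Finset α) : #y = #{a ∈ y | π a} + #{a ∈ y | ¬π a} :=
    (card_filter_add_card_filter_not π).symm
  have hsdiff (π' : α → Prop) [DecidablePred π'] :
      {a ∈ B \ x | π' a} = {a ∈ B | π' a} \ {a ∈ x | π' a} := by
    ext; simp only [mem_filter, mem_sdiff]; tauto
  simp only [bernoulliWeight]
  rw [hsplit x, hsplit (B \ x), hsdiff, hsdiff, pow_add, pow_add]
  ring

theorem sum_bernoulliWeight_filter_and (hρκ : ρ + κ = 1) (B : Finset α) (π : α → Prop)
    [DecidablePred π] (Q₁ Q₂ : Finset α → Prop) [DecidablePred Q₁] [DecidablePred Q₂] :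
    ∑ x ∈ B.powerset with Q₁ {a ∈ x | π a} ∧ Q₂ {a ∈ x | ¬π a}, bernoulliWeight ρ κ B x =
      (∑ x ∈ B.powerset with Q₁ {a ∈ x | π a}, bernoulliWeight ρ κ B x) *
        ∑ x ∈ B.powerset with Q₂ {a ∈ x | ¬π a}, bernoulliWeight ρ κ B x := by
  have hfactor (Q₁ Q₂ : Finset α → Prop) [DecidablePred Q₁] [DecidablePred Q₂] :
      ∑ x ∈ B.powerset with Q₁ {a ∈ x | π a} ∧ Q₂ {a ∈ x | ¬π a}, bernoulliWeight ρ κ B x =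
        (∑ y ∈ {a ∈ B | π a}.powerset with Q₁ y, bernoulliWeight ρ κ {a ∈ B | π a} y) *
          ∑ z ∈ {a ∈ B | ¬π a}.powerset with Q₂ z, bernoulliWeight ρ κ {a ∈ B | ¬π a} z := by
    rw [sum_filter, sum_filter, sum_filter, ← sum_powerset_filter_mul_filter_not]
    refine sum_congr rfl fun x _ => ?_
    rw [bernoulliWeight_eq_mul_filter_not B x π, ite_and]
    split_ifs <;> simp
  have h₁ := hfactor Q₁ (fun _ => True)
  have h₂ := hfactor (fun _ => True) Q₂
  simp only [and_true, true_and, filter_true, sum_bernoulliWeight, hρκ, one_pow, mul_one,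
    one_mul] at h₁ h₂
  rw [hfactor, h₁, h₂]

end BernoulliWeight

section PartialSums

/-- `enumFromZero x k` is the `k`-th smallest element of `{0} ∪ x`, read as the `k`-th
renewal epoch when the epochs in `[1, b]` are `x`. -/
noncomputable def enumFromZero (x : Finset ℕ) : ℕ → ℕ := Nat.nth (· ∈ insert 0 x)

variable {x : Finset ℕ} {b : ℕ}

theorem enumFromZero_zero : enumFromZero x 0 = 0 :=
  Nat.nth_zero_of_zero (mem_insert_self 0 x)

theorem card_toFinset_mem_insert_zero (h0 : 0 ∉ x) (hf : (Set.ofPred (· ∈ insert 0 x)).Finite) :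
    #hf.toFinset = #x + 1 := by
  rw [← card_insert_of_notMem h0]
  exact congrArg card (finite_toSet_toFinset _)

theorem strictMonoOn_enumFromZero (h0 : 0 ∉ x) :
    StrictMonoOn (enumFromZero x) (Set.Iic #x) := by
  have hf := Nat.nth_strictMonoOn (insert 0 x).finite_toSet
  rw [card_toFinset_mem_insert_zero h0] at hf
  exact hf.mono fun k hk => Nat.lt_succ_of_le hk

theorem image_enumFromZero (h0 : 0 ∉ x) : (Icc 1 #x).image (enumFromZero x) = x := by
  have hmono := strictMonoOn_enumFromZero h0
  have hIcc : (Icc 1 #x : Set ℕ) ⊆ Set.Iic #x := fun k hk => (Finset.mem_Icc.1 hk).2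
  refine eq_of_subset_of_card_le (fun j hj => ?_) ?_
  · obtain ⟨k, hk, rfl⟩ := mem_image.1 hj
    have hk := Finset.mem_Icc.1 hk
    have hpos : enumFromZero x 0 < enumFromZero x k := hmono (by simp) hk.2 (by omega)
    have hmem : enumFromZero x k ∈ insert 0 x :=
      Nat.nth_mem_of_lt_card (insert 0 x).finite_toSet
        (by rw [card_toFinset_mem_insert_zero h0]; omega)
    rw [enumFromZero_zero] at hpos
    exact (mem_insert.1 hmem).resolve_left hpos.ne'
  · rw [card_image_of_injOn (hmono.injOn.mono hIcc), Nat.card_Icc, Nat.add_sub_cancel]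

theorem zero_notMem_of_subset_Icc (hx : x ⊆ Icc 1 b) : 0 ∉ x :=
  fun h => by simpa using hx h

theorem enumFromZero_card_le (hx : x ⊆ Icc 1 b) : enumFromZero x #x ≤ b := by
  rcases Nat.eq_zero_or_pos #x with h | h
  · rw [h, enumFromZero_zero]
    exact Nat.zero_le b
  · have hmem : enumFromZero x #x ∈ (Icc 1 #x).image (enumFromZero x) :=
      mem_image_of_mem _ (Finset.mem_Icc.2 ⟨by omega, le_rfl⟩)
    rw [image_enumFromZero (zero_notMem_of_subset_Icc hx)] at hmem
    exact (Finset.mem_Icc.1 (hx hmem)).2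

theorem forall_sum_range_eq_iff (u e : ℕ → ℕ) (he0 : e 0 = 0) {T : ℕ}
    (he : MonotoneOn e (Set.Iic T)) :
    (∀ k ≤ T, ∑ i ∈ range k, u i = e k) ↔ ∀ i < T, u i = e (i + 1) - e i := by
  induction T with
  | zero => simp [he0]
  | succ T ih =>
    have hstep : e T ≤ e (T + 1) :=
      he (Set.mem_Iic.2 (Nat.le_succ T)) (Set.mem_Iic.2 le_rfl) (Nat.le_succ T)
    specialize ih (he.mono fun k hk => Nat.le_succ_of_le hk)
    simp only [← Nat.lt_succ_iff] at ih ⊢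
    rw [Nat.forall_lt_succ_right (p := fun k => ∑ i ∈ range k, u i = e k),
      Nat.forall_lt_succ_right (p := fun i => u i = e (i + 1) - e i), ← ih, sum_range_succ]
    constructor
    · rintro ⟨h, hT⟩
      exact ⟨h, by rw [h T (Nat.lt_succ_self T)] at hT; omega⟩
    · rintro ⟨h, hT⟩
      exact ⟨h, by rw [h T (Nat.lt_succ_self T)]; omega⟩

theorem sum_range_sub_sub_one_add {e : ℕ → ℕ} {T : ℕ} (he : StrictMonoOn e (Set.Iic T)) :
    ∑ i ∈ range T, (e (i + 1) - e i - 1) + T + e 0 = e T := by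
  induction T with
  | zero => simp
  | succ T ih =>
    have hstep : e T < e (T + 1) :=
      he (Set.mem_Iic.2 (Nat.le_succ T)) (Set.mem_Iic.2 le_rfl) (Nat.lt_succ_self T)
    have := ih (he.mono fun k hk => Nat.le_succ_of_le hk)
    rw [sum_range_succ]
    omega

theorem setOf_partialSums_eqOn_eq {Ω : Type*} (V : ℕ → Ω → ℕ) {e : ℕ → ℕ} {T : ℕ}
    (he0 : e 0 = 0) (he : MonotoneOn e (Set.Iic T)) (heb : e T ≤ b) :
    {ω | (∀ k ≤ T, ∑ i ∈ range k, V i ω = e k) ∧ b < ∑ i ∈ range (T + 1), V i ω} =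
      ⋂ i ∈ range (T + 1),
        V i ⁻¹' (if i < T then {e (i + 1) - e i} else Set.Ioi (b - e T)) := by
  ext ω
  simp only [Set.mem_ofPred_eq, Set.mem_iInter, Set.mem_preimage, mem_range,
    forall_sum_range_eq_iff _ _ he0 he]
  constructor
  · rintro ⟨hgap, hb⟩ i hi
    rcases Nat.lt_succ_iff_lt_or_eq.1 hi with hi | rfl
    · simp [hi, hgap i hi]
    · rw [sum_range_succ, (forall_sum_range_eq_iff _ _ he0 he).2 hgap i le_rfl] at hb
      simp only [lt_irrefl, if_false, Set.mem_Ioi]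
      omega
  · intro h
    have hgap : ∀ i < T, V i ω = e (i + 1) - e i := fun i hi => by
      simpa [hi] using h i (Nat.lt_succ_of_lt hi)
    refine ⟨hgap, ?_⟩
    have hT := h T (Nat.lt_succ_self T)
    simp only [lt_irrefl, if_false, Set.mem_Ioi] at hT
    rw [sum_range_succ, (forall_sum_range_eq_iff _ _ he0 he).2 hgap T le_rfl]
    omega

theorem natCard_le_eq_card_filter_image {σ : ℕ → ℕ} (hσ : Monotone σ) {T : ℕ}
    (hinj : Set.InjOn σ (Icc 1 T)) {r : ℝ} (hr : r < σ (T + 1)) :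
    Nat.card {k : ℕ // 1 ≤ k ∧ (σ k : ℝ) ≤ r} =
      #{j ∈ (Icc 1 T).image σ | ((j : ℕ) : ℝ) ≤ r} := by
  have hiff (k : ℕ) : 1 ≤ k ∧ (σ k : ℝ) ≤ r ↔ k ∈ {k ∈ Icc 1 T | (σ k : ℝ) ≤ r} := by
    simp only [mem_filter, Finset.mem_Icc]
    constructor
    · rintro ⟨hk1, hkr⟩
      refine ⟨⟨hk1, ?_⟩, hkr⟩
      by_contra! hkT
      have : (σ (T + 1) : ℝ) ≤ σ k := by exact_mod_cast hσ hkT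
      linarith
    · rintro ⟨⟨hk1, -⟩, hkr⟩
      exact ⟨hk1, hkr⟩
  rw [Nat.card_congr (Equiv.subtypeEquivRight hiff), Nat.card_eq_finsetCard, filter_image,
    card_image_of_injOn (hinj.mono (filter_subset _ _))]

end PartialSums

/-- The event that the renewal epochs in `[1, b]` are exactly `x`. -/
def renewalsEq {Ω : Type*} (S : ℕ → Ω → ℕ) (b : ℕ) (x : Finset ℕ) : Set Ω :=
  {ω | (∀ k ≤ #x, S k ω = enumFromZero x k) ∧ b < S (#x + 1) ω}

section RenewalsEq
variable {Ω : Type*} {S : ℕ → Ω → ℕ} {b : ℕ} {x : Finset ℕ} {ω : Ω}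

theorem image_eq_of_mem_renewalsEq (hx : 0 ∉ x) (hω : ω ∈ renewalsEq S b x) :
    (Icc 1 #x).image (S · ω) = x := by
  nth_rw 2 [← image_enumFromZero hx]
  exact image_congr fun k hk => hω.1 k (Finset.mem_Icc.1 hk).2

theorem pairwiseDisjoint_renewalsEq :
    ((Icc 1 b).powerset : Set (Finset ℕ)).PairwiseDisjoint (renewalsEq S b) := by
  have hcard_le (x y : Finset ℕ) (hy : y ⊆ Icc 1 b) (ω : Ω) (hωx : ω ∈ renewalsEq S b x)
      (hωy : ω ∈ renewalsEq S b y) : ¬#x < #y := fun hlt => by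
    have hmem : S (#x + 1) ω ∈ y := by
      rw [← image_eq_of_mem_renewalsEq (zero_notMem_of_subset_Icc hy) hωy]
      exact mem_image_of_mem _ (Finset.mem_Icc.2 ⟨Nat.le_add_left 1 _, hlt⟩)
    have := (Finset.mem_Icc.1 (hy hmem)).2
    exact absurd hωx.2 (by omega)
  intro x hx y hy hxy
  rw [Function.onFun, Set.disjoint_left]
  intro ω hωx hωy
  simp only [coe_powerset, Set.mem_preimage, Set.mem_powerset_iff, coe_subset] at hx hy
  have hcard : #x = #y := by
    have := hcard_le x y hy ω hωx hωy
    have := hcard_le y x hx ω hωy hωx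
    omega
  apply hxy
  rw [← image_eq_of_mem_renewalsEq (zero_notMem_of_subset_Icc hx) hωx,
    ← image_eq_of_mem_renewalsEq (zero_notMem_of_subset_Icc hy) hωy, hcard]

theorem natCard_le_of_mem_renewalsEq (hS : Monotone (S · ω)) (hx : 0 ∉ x)
    (hω : ω ∈ renewalsEq S b x) {r : ℝ} (hr : r < b + 1) :
    Nat.card {k : ℕ // 1 ≤ k ∧ (S k ω : ℝ) ≤ r} = #{j ∈ x | ((j : ℕ) : ℝ) ≤ r} := by
  have hinj : Set.InjOn (S · ω) (Icc 1 #x) := by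
    refine ((strictMonoOn_enumFromZero hx).injOn.mono ?_).congr ?_
    · exact fun k hk => (Finset.mem_Icc.1 hk).2
    · exact fun k hk => (hω.1 k (Finset.mem_Icc.1 hk).2).symm
  have hr' : r < S (#x + 1) ω := hr.trans_le (by exact_mod_cast hω.2)
  rw [natCard_le_eq_card_filter_image hS hinj hr', image_eq_of_mem_renewalsEq hx hω]

theorem natCard_sub_natCard_of_mem_renewalsEq {s t : ℝ} (hS : Monotone (S · ω))
    (hx : x ⊆ Icc 1 ⌊t⌋₊) (hω : ω ∈ renewalsEq S ⌊t⌋₊ x) (hst : s ≤ t) :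
    Nat.card {k : ℕ // 1 ≤ k ∧ (S k ω : ℝ) ≤ t} - Nat.card {k : ℕ // 1 ≤ k ∧ (S k ω : ℝ) ≤ s} =
      #{j ∈ x | ¬((j : ℕ) : ℝ) ≤ s} := by
  have h0 := zero_notMem_of_subset_Icc hx
  have ht := Nat.lt_floor_add_one t
  have hxt : #{j ∈ x | ((j : ℕ) : ℝ) ≤ t} = #x := by
    refine congrArg card (filter_true_of_mem fun j hj => ?_)
    have hj := Finset.mem_Icc.1 (hx hj)
    exact (Nat.le_floor_iff' (by omega)).1 hj.2
  rw [natCard_le_of_mem_renewalsEq hS h0 hω ht,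
    natCard_le_of_mem_renewalsEq hS h0 hω (hst.trans_lt ht), hxt,
    ← card_filter_add_card_filter_not (fun j : ℕ => (j : ℝ) ≤ s) (s := x)]
  exact Nat.add_sub_cancel_left _ _

end RenewalsEq

section Measure
variable {Ω : Type*} [MeasurableSpace Ω] {P : Measure Ω} {ρ κ : ℝ≥0∞}

theorem measure_eq_sum_filter_of_sum_eq_one [IsProbabilityMeasure P] {ι : Type*}
    {s : Finset ι} {C : ι → Set Ω} (hC : ∀ i ∈ s, MeasurableSet (C i))
    (hdisj : (s : Set ι).PairwiseDisjoint C) (hsum : ∑ i ∈ s, P (C i) = 1) {A : Set Ω}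
    (Q : ι → Prop) [DecidablePred Q] (hA : ∀ i ∈ s, ∀ ω ∈ C i, ω ∈ A ↔ Q i) :
    P A = ∑ i ∈ s with Q i, P (C i) := by
  have hfull : P (⋃ i ∈ s, C i)ᶜ = 0 := by
    rw [prob_compl_eq_zero_iff (s.measurableSet_biUnion hC), measure_biUnion_finset hdisj hC,
      hsum]
  have hsplit : A ∩ ⋃ i ∈ s, C i = ⋃ i ∈ {i ∈ s | Q i}, C i := by
    ext ω
    simp only [Set.mem_inter_iff, Set.mem_iUnion, mem_filter, exists_prop]
    constructor
    · rintro ⟨hωA, i, hi, hωi⟩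
      exact ⟨i, ⟨hi, (hA i hi ω hωi).1 hωA⟩, hωi⟩
    · rintro ⟨i, ⟨hi, hQ⟩, hωi⟩
      exact ⟨(hA i hi ω hωi).2 hQ, i, hi, hωi⟩
  rw [← measure_inter_conull hfull, hsplit,
    measure_biUnion_finset (hdisj.subset (coe_subset.2 (filter_subset _ _)))
      fun i hi => hC i (mem_filter.1 hi).1]

theorem measure_preimage_Ioi_of_geometric {X : Ω → ℕ} (hX : Measurable X) (hρ : ρ ≠ 0)
    (hρκ : ρ + κ = 1) (hgeom : ∀ k, 1 ≤ k → P (X ⁻¹' {k}) = ρ * κ ^ (k - 1)) (c : ℕ) :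
    P (X ⁻¹' Set.Ioi c) = κ ^ c := by
  have hunion : X ⁻¹' Set.Ioi c = ⋃ k : ℕ, X ⁻¹' {c + 1 + k} := by
    ext ω
    simp only [Set.mem_preimage, Set.mem_Ioi, Set.mem_iUnion, Set.mem_singleton_iff]
    exact ⟨fun h => ⟨X ω - (c + 1), by omega⟩, fun ⟨k, hk⟩ => by omega⟩
  have hdisj : Pairwise (Function.onFun Disjoint fun k : ℕ => X ⁻¹' {c + 1 + k}) :=
    fun k l hkl => (Set.disjoint_singleton.2 (by omega)).preimage X
  have hρ_top : ρ ≠ ∞ := ne_top_of_le_ne_top ENNReal.one_ne_top (hρκ ▸ le_self_add)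
  have hκ_top : κ ≠ ∞ := ne_top_of_le_ne_top ENNReal.one_ne_top (hρκ ▸ le_add_self)
  rw [hunion, measure_iUnion hdisj fun k => hX (measurableSet_singleton _)]
  calc ∑' k, P (X ⁻¹' {c + 1 + k}) = ∑' k : ℕ, ρ * κ ^ c * κ ^ k := by
        refine tsum_congr fun k => ?_
        rw [hgeom _ (by omega), show c + 1 + k - 1 = c + k by omega, pow_add, mul_assoc]
    _ = κ ^ c := by
        rw [ENNReal.tsum_mul_left, ENNReal.tsum_geometric,
          ENNReal.sub_eq_of_eq_add hκ_top hρκ.symm, mul_right_comm,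
          ENNReal.mul_inv_cancel hρ hρ_top, one_mul]

variable {V S : ℕ → Ω → ℕ} {b : ℕ} {x : Finset ℕ}

theorem measure_setOf_partialSums_eqOn (hV : ∀ i, Measurable (V i)) (hρ : ρ ≠ 0)
    (hρκ : ρ + κ = 1) (hgeom : ∀ i k, 1 ≤ k → P (V i ⁻¹' {k}) = ρ * κ ^ (k - 1))
    (hind : iIndepFun V P) {e : ℕ → ℕ} {T : ℕ} (he0 : e 0 = 0)
    (he : StrictMonoOn e (Set.Iic T)) (heb : e T ≤ b) :
    P {ω | (∀ k ≤ T, ∑ i ∈ range k, V i ω = e k) ∧ b < ∑ i ∈ range (T + 1), V i ω} =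
      ρ ^ T * κ ^ (b - T) := by
  have hgap (i : ℕ) (hi : i < T) : 1 ≤ e (i + 1) - e i := by
    have := he (Set.mem_Iic.2 hi.le) (show i + 1 ∈ Set.Iic T from hi) (Nat.lt_add_one i)
    omega
  rw [setOf_partialSums_eqOn_eq V he0 he.monotoneOn heb,
    hind.measure_inter_preimage_eq_mul _ fun i _ => by split_ifs <;> measurability,
    prod_range_succ, if_neg (lt_irrefl T),
    measure_preimage_Ioi_of_geometric (hV T) hρ hρκ (hgeom T),
    prod_congr rfl fun i hi => by rw [if_pos (mem_range.1 hi), hgeom i _ (hgap i (mem_range.1 hi))],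
    prod_mul_distrib, prod_const, card_range, prod_pow_eq_pow_sum, mul_assoc, ← pow_add]
  have := sum_range_sub_sub_one_add he
  congr 2
  omega

theorem measurableSet_renewalsEq (hS : ∀ k ω, S k ω = ∑ i ∈ range k, V i ω)
    (hV : ∀ i, Measurable (V i)) (hx : x ⊆ Icc 1 b) :
    MeasurableSet (renewalsEq S b x) := by
  simp only [renewalsEq, hS]
  rw [setOf_partialSums_eqOn_eq V enumFromZero_zero
    (strictMonoOn_enumFromZero (zero_notMem_of_subset_Icc hx)).monotoneOn
    (enumFromZero_card_le hx)]
  exact MeasurableSet.biInter (Set.to_countable _) fun i _ => hV i (by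
    split_ifs
    exacts [measurableSet_singleton _, measurableSet_Ioi])

theorem measure_renewalsEq (hS : ∀ k ω, S k ω = ∑ i ∈ range k, V i ω)
    (hV : ∀ i, Measurable (V i)) (hρ : ρ ≠ 0) (hρκ : ρ + κ = 1)
    (hgeom : ∀ i k, 1 ≤ k → P (V i ⁻¹' {k}) = ρ * κ ^ (k - 1)) (hind : iIndepFun V P)
    (hx : x ⊆ Icc 1 b) :
    P (renewalsEq S b x) = bernoulliWeight ρ κ (Icc 1 b) x := by
  simp only [renewalsEq, hS]
  rw [measure_setOf_partialSums_eqOn hV hρ hρκ hgeom hind enumFromZero_zero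
    (strictMonoOn_enumFromZero (zero_notMem_of_subset_Icc hx)) (enumFromZero_card_le hx),
    bernoulliWeight, card_sdiff_of_subset hx, Nat.card_Icc, Nat.add_sub_cancel]

theorem measure_eq_sum_bernoulliWeight [IsProbabilityMeasure P]
    (hS : ∀ k ω, S k ω = ∑ i ∈ range k, V i ω) (hV : ∀ i, Measurable (V i))
    (hρ : ρ ≠ 0) (hρκ : ρ + κ = 1) (hgeom : ∀ i k, 1 ≤ k → P (V i ⁻¹' {k}) = ρ * κ ^ (k - 1))
    (hind : iIndepFun V P) (A : Set Ω) (Q : Finset ℕ → Prop) [DecidablePred Q]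
    (hA : ∀ x ⊆ Icc 1 b, ∀ ω ∈ renewalsEq S b x, ω ∈ A ↔ Q x) :
    P A = ∑ x ∈ (Icc 1 b).powerset with Q x, bernoulliWeight ρ κ (Icc 1 b) x := by
  have hprob (x : Finset ℕ) (hx : x ∈ (Icc 1 b).powerset) :=
    measure_renewalsEq hS hV hρ hρκ hgeom hind (mem_powerset.1 hx)
  rw [measure_eq_sum_filter_of_sum_eq_one
    (fun x hx => measurableSet_renewalsEq hS hV (mem_powerset.1 hx))
    pairwiseDisjoint_renewalsEq
    (by rw [sum_congr rfl hprob, sum_bernoulliWeight, hρκ, one_pow])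
    Q fun x hx => hA x (mem_powerset.1 hx)]
  exact sum_congr rfl fun x hx => hprob x (mem_filter.1 hx).1

end Measure

theorem geom_renewal_increment_indep_general
    {Ω : Type*} [MeasurableSpace Ω] (P : Measure Ω) [IsProbabilityMeasure P]
    (p q : ℝ) (hp : p ∈ Set.Ioo (0 : ℝ) 1) (hq : q = 1 - p)
    (U : ℕ → Ω → ℕ)
    (hUmeas : ∀ m, Measurable (U m))
    (hUindep : iIndepFun (fun m => U (m + 1)) P)
    (hUgeom : ∀ m, 1 ≤ m → ∀ k, 1 ≤ k →
      P {ω | U m ω = k} = ENNReal.ofReal (p * q ^ (k - 1)))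
    (S : ℕ → Ω → ℕ) (hS : ∀ k ω, S k ω = ∑ i ∈ Finset.range k, U (i + 1) ω)
    (L : ℝ → Ω → ℕ)
    (hL : ∀ t ω, L t ω = Nat.card {k : ℕ // 1 ≤ k ∧ (S k ω : ℝ) ≤ t})
    (s t : ℝ) (hst : s ≤ t) :
    ∀ m n : ℕ,
      P {ω | L s ω = m ∧ L t ω - L s ω = n} =
        P {ω | L s ω = m} * P {ω | L t ω - L s ω = n} := by
  intro m n
  have hp0 : 0 ≤ p := hp.1.le
  have hq0 : 0 ≤ q := by rw [hq]; linarith [hp.2]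
  have hρκ : ENNReal.ofReal p + ENNReal.ofReal q = 1 := by
    rw [← ENNReal.ofReal_add hp0 hq0, hq, add_sub_cancel, ENNReal.ofReal_one]
  have hgeom (i k : ℕ) (hk : 1 ≤ k) :
      P (U (i + 1) ⁻¹' {k}) = ENNReal.ofReal p * ENNReal.ofReal q ^ (k - 1) := by
    rw [← ENNReal.ofReal_pow hq0, ← ENNReal.ofReal_mul hp0]
    exact hUgeom (i + 1) (Nat.le_add_left 1 i) k hk
  have hlaw := measure_eq_sum_bernoulliWeight (V := fun i => U (i + 1)) hS
    (b := ⌊t⌋₊) (fun i => hUmeas (i + 1)) (ENNReal.ofReal_pos.2 hp.1).ne' hρκ hgeom hUindep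
  have hcount (x : Finset ℕ) (hx : x ⊆ Icc 1 ⌊t⌋₊) (ω : Ω) (hω : ω ∈ renewalsEq S ⌊t⌋₊ x) :
      L s ω = #{j ∈ x | ((j : ℕ) : ℝ) ≤ s} ∧
        L t ω - L s ω = #{j ∈ x | ¬((j : ℕ) : ℝ) ≤ s} := by
    have hmono : Monotone (S · ω) :=
      monotone_nat_of_le_succ fun k => by simp only [hS, sum_range_succ]; omega
    rw [hL, hL]
    exact ⟨natCard_le_of_mem_renewalsEq hmono (zero_notMem_of_subset_Icc hx) hω
      (hst.trans_lt (Nat.lt_floor_add_one t)),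
      natCard_sub_natCard_of_mem_renewalsEq hmono hx hω hst⟩
  rw [hlaw _ (fun x => #{j ∈ x | ((j : ℕ) : ℝ) ≤ s} = m ∧ #{j ∈ x | ¬((j : ℕ) : ℝ) ≤ s} = n)
      fun x hx ω hω => by rw [Set.mem_ofPred_eq, (hcount x hx ω hω).2, (hcount x hx ω hω).1],
    hlaw _ (fun x => #{j ∈ x | ((j : ℕ) : ℝ) ≤ s} = m)
      fun x hx ω hω => by rw [Set.mem_ofPred_eq, (hcount x hx ω hω).1],
    hlaw _ (fun x => #{j ∈ x | ¬((j : ℕ) : ℝ) ≤ s} = n)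
      fun x hx ω hω => by rw [Set.mem_ofPred_eq, (hcount x hx ω hω).2]]
  exact sum_bernoulliWeight_filter_and hρκ _ _ (fun y => #y = m) (fun z => #z = n)

/-- For a renewal counting process `L` with i.i.d. geometric interarrival times of
parameter `p`, for all `0 ≤ s ≤ t` the random variables `L(s)` and `L(t) - L(s)`
are independent: `P{L(s) = m, L(t) - L(s) = n} = P{L(s) = m} · P{L(t) - L(s) = n}`. -/
theorem geom_renewal_increment_indep
    {Ω : Type*} [MeasurableSpace Ω] (P : Measure Ω) [IsProbabilityMeasure P]
    (p q : ℝ) (hp : p ∈ Set.Ioo (0 : ℝ) 1) (hq : q = 1 - p)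
    (U : ℕ → Ω → ℕ)
    (hUmeas : ∀ m, Measurable (U m))
    (hUindep : iIndepFun (fun m => U (m + 1)) P)
    (hUgeom : ∀ m, 1 ≤ m → ∀ k, 1 ≤ k →
      P {ω | U m ω = k} = ENNReal.ofReal (p * q ^ (k - 1)))
    (S : ℕ → Ω → ℕ) (hS : ∀ k ω, S k ω = ∑ i ∈ Finset.range k, U (i + 1) ω)
    (L : ℝ → Ω → ℕ)
    (hL : ∀ t ω, L t ω = Nat.card {k : ℕ // 1 ≤ k ∧ (S k ω : ℝ) ≤ t})
    (s t : ℝ) (hs : 0 ≤ s) (hst : s ≤ t) :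
    ∀ m n : ℕ,
      P {ω | L s ω = m ∧ L t ω - L s ω = n} =
        P {ω | L s ω = m} * P {ω | L t ω - L s ω = n} :=
  geom_renewal_increment_indep_general P p q hp hq U hUmeas hUindep hUgeom S hS L hL s t hst
end

section
/- For every x ≥ 0, we have ∫_x^∞ φ(u) du ≤ 2·φ(x) / (x + √(x² + 8/π)), where φ(u) = (2π)^{−1/2}·exp(−u²/2) is the standard Gaussian density. -/
/-!
Let `φ` be the standard normal density and `m x = 2 / (x + √(x² + 8/π))`. The gap
`W x = φ x * m x - ∫_x^∞ φ` vanishes at `0` (there `m 0 = √(π/2) = 1 / (2 φ 0)`) and tends to `0` at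
`+∞`, and `W' = φ · N / (√(x² + 8/π) (x + √(x² + 8/π)))` with
`N x = 8/π - 2 - (x √(x² + 8/π) - x²)` decreasing. So `W'` changes sign at most once, from `+` to
`-`: `W` first increases and then decreases towards its limit `0`, hence `W ≥ 0` on `[0, ∞)`.
-/

open MeasureTheory Set Filter Topology Real ProbabilityTheory

section TailIntegral

variable {E : Type*} [NormedAddCommGroup E] [NormedSpace ℝ E] {f : ℝ → E}

theorem hasDerivAt_integral_Ioi [CompleteSpace E] (hf : Integrable f) (hc : Continuous f) (x : ℝ) :
    HasDerivAt (fun y ↦ ∫ u in Ioi y, f u) (-f x) x := by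
  have h : (fun y ↦ ∫ u in Ioi y, f u) = fun y ↦ (∫ u in Ioi 0, f u) - ∫ u in 0..y, f u :=
    funext fun y ↦ eq_sub_of_add_eq'
      (intervalIntegral.integral_interval_add_Ioi hf.integrableOn hf.integrableOn)
  rw [h]
  simpa using (intervalIntegral.integral_hasDerivAt_right hf.intervalIntegrable
    hc.stronglyMeasurable.stronglyMeasurableAtFilter hc.continuousAt).const_sub
    (∫ u in Ioi 0, f u)

theorem tendsto_integral_Ioi_atTop {a : ℝ} (hf : IntegrableOn f (Ioi a)) :
    Tendsto (fun y ↦ ∫ u in Ioi y, f u) atTop (𝓝 0) := by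
  have h : ∀ᶠ y in atTop, (∫ u in Ioi a, f u) - ∫ u in a..y, f u = ∫ u in Ioi y, f u :=
    (eventually_ge_atTop a).mono fun y hy ↦ by
      rw [← intervalIntegral.integral_Ioi_sub_Ioi hf hy, sub_sub_cancel]
  simpa using (tendsto_const_nhds.sub
    (intervalIntegral_tendsto_integral_Ioi a hf tendsto_id)).congr' h

end TailIntegral

theorem nonneg_of_hasDerivAt_of_sign_change {f f' : ℝ → ℝ} {a : ℝ}
    (hf : ∀ x ≥ a, HasDerivAt f (f' x) x) (hsign : ∀ x ≥ a, f' x < 0 → ∀ y ≥ x, f' y ≤ 0)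
    (ha : 0 ≤ f a) (htop : Tendsto f atTop (𝓝 0)) {x : ℝ} (hx : a ≤ x) : 0 ≤ f x := by
  have hcont : ContinuousOn f (Ici a) := fun y hy ↦ (hf y hy).continuousAt.continuousWithinAt
  by_cases hneg : ∃ y ∈ Icc a x, f' y < 0
  · obtain ⟨y, ⟨hay, hyx⟩, hy⟩ := hneg
    have hanti : AntitoneOn f (Ici y) := by
      refine antitoneOn_of_hasDerivWithinAt_nonpos (f' := f') (convex_Ici y)
        (hcont.mono (Ici_subset_Ici.2 hay)) (fun z hz ↦ ?_) fun z hz ↦ ?_ <;>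
        rw [interior_Ici] at hz
      · exact (hf z (hay.trans hz.le)).hasDerivWithinAt
      · exact hsign y hay hy z hz.le
    exact le_of_tendsto htop <| (eventually_ge_atTop x).mono fun z hz ↦
      hanti hyx (hyx.trans hz) hz
  · push Not at hneg
    have hmono : MonotoneOn f (Icc a x) := by
      refine monotoneOn_of_hasDerivWithinAt_nonneg (convex_Icc a x)
        (hcont.mono Icc_subset_Ici_self) (fun z hz ↦ ?_) fun z hz ↦ hneg z (interior_subset hz)
      rw [interior_Icc] at hz
      exact (hf z hz.1.le).hasDerivWithinAt
    exact ha.trans (hmono ⟨le_rfl, hx⟩ ⟨hx, le_rfl⟩ hx)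

section SqrtSqAdd

variable {c : ℝ}

theorem add_sqrt_sq_add_pos (hc : 0 < c) (x : ℝ) : 0 < x + √(x ^ 2 + c) := by
  have : -x < √(x ^ 2 + c) := lt_sqrt_of_sq_lt (by rw [neg_sq]; linarith)
  linarith

theorem hasDerivAt_sqrt_sq_add (hc : 0 < c) (x : ℝ) :
    HasDerivAt (fun y ↦ √(y ^ 2 + c)) (x / √(x ^ 2 + c)) x := by
  refine (((hasDerivAt_pow 2 x).add_const c).sqrt (by positivity)).congr_deriv ?_
  field_simp
  ring

theorem monotone_mul_sqrt_sq_add_sub_sq (hc : 0 < c) :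
    Monotone fun x ↦ x * √(x ^ 2 + c) - x ^ 2 := by
  refine monotone_of_hasDerivAt_nonneg (f' := fun x ↦ (√(x ^ 2 + c) - x) ^ 2 / √(x ^ 2 + c))
    (fun x ↦ ?_) fun x ↦ by positivity
  have hs : 0 < √(x ^ 2 + c) := by positivity
  refine (((hasDerivAt_id' x).mul (hasDerivAt_sqrt_sq_add hc x)).sub
    (hasDerivAt_pow 2 x)).congr_deriv ?_
  field_simp
  ring

theorem hasDerivAt_two_div_add_sqrt_sq_add (hc : 0 < c) (x : ℝ) :
    HasDerivAt (fun y ↦ 2 / (y + √(y ^ 2 + c)))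
      (-2 / (√(x ^ 2 + c) * (x + √(x ^ 2 + c)))) x := by
  have hxs := (add_sqrt_sq_add_pos hc x).ne'
  refine ((hasDerivAt_const x (2 : ℝ)).div ((hasDerivAt_id' x).add (hasDerivAt_sqrt_sq_add hc x))
    hxs).congr_deriv ?_
  simp only [Pi.add_apply]
  field_simp
  ring

end SqrtSqAdd

section StandardGaussian

theorem gaussianPDFReal_zero_one (u : ℝ) :
    gaussianPDFReal 0 1 u = (√(2 * π))⁻¹ * exp (-u ^ 2 / 2) := by
  simp [gaussianPDFReal]

theorem hasDerivAt_gaussianPDFReal_zero_one (x : ℝ) :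
    HasDerivAt (gaussianPDFReal 0 1) (-x * gaussianPDFReal 0 1 x) x := by
  simp only [funext gaussianPDFReal_zero_one]
  refine (((hasDerivAt_pow 2 x).neg.div_const 2).exp.const_mul _).congr_deriv ?_
  simp only [Pi.neg_apply]
  ring

theorem continuous_gaussianPDFReal_zero_one : Continuous (gaussianPDFReal 0 1) :=
  continuous_iff_continuousAt.2 fun x ↦ (hasDerivAt_gaussianPDFReal_zero_one x).continuousAt

theorem tendsto_gaussianPDFReal_zero_one_atTop : Tendsto (gaussianPDFReal 0 1) atTop (𝓝 0) := by
  have h : Tendsto (fun u : ℝ ↦ -u ^ 2 / 2) atTop atBot := by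
    simpa only [neg_div, Function.comp_def] using
      tendsto_neg_atTop_atBot.comp ((tendsto_pow_atTop two_ne_zero).atTop_div_const two_pos)
  simpa [funext gaussianPDFReal_zero_one] using (tendsto_exp_atBot.comp h).const_mul (√(2 * π))⁻¹

theorem integral_Ioi_zero_gaussianPDFReal_zero_one :
    ∫ u in Ioi 0, gaussianPDFReal 0 1 u = 1 / 2 := by
  have h : ∀ u : ℝ, gaussianPDFReal 0 1 u = (√(2 * π))⁻¹ * exp (-(1 / 2) * u ^ 2) := fun u ↦ by
    rw [gaussianPDFReal_zero_one]; ring_nf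
  simp_rw [h]
  rw [integral_const_mul, integral_gaussian_Ioi, div_div_eq_mul_div, div_one, mul_comm π 2]
  have : √(2 * π) ≠ 0 := by positivity
  field_simp

end StandardGaussian

noncomputable def gaussianTailGap (x : ℝ) : ℝ :=
  gaussianPDFReal 0 1 x * (2 / (x + √(x ^ 2 + 8 / π))) - ∫ u in Ioi x, gaussianPDFReal 0 1 u

theorem hasDerivAt_gaussianTailGap (x : ℝ) :
    HasDerivAt gaussianTailGap (gaussianPDFReal 0 1 x *
      (8 / π - 2 - (x * √(x ^ 2 + 8 / π) - x ^ 2)) /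
      (√(x ^ 2 + 8 / π) * (x + √(x ^ 2 + 8 / π)))) x := by
  have hc : 0 < 8 / π := by positivity
  have hxs := (add_sqrt_sq_add_pos hc x).ne'
  refine (((hasDerivAt_gaussianPDFReal_zero_one x).mul
    (hasDerivAt_two_div_add_sqrt_sq_add hc x)).sub
    (hasDerivAt_integral_Ioi (integrable_gaussianPDFReal 0 1)
      continuous_gaussianPDFReal_zero_one x)).congr_deriv ?_
  have hsq : √(x ^ 2 + 8 / π) ^ 2 = x ^ 2 + 8 / π := sq_sqrt (by positivity)
  have hs : √(x ^ 2 + 8 / π) ≠ 0 := by positivity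
  have hpi := pi_pos.ne'
  set s := √(x ^ 2 + 8 / π)
  field_simp at hsq ⊢
  linear_combination gaussianPDFReal 0 1 x * hsq

theorem gaussianTailGap_zero : gaussianTailGap 0 = 0 := by
  have h : √(2 * π) * √(8 / π) = 4 := by
    rw [← sqrt_mul (by positivity), show 2 * π * (8 / π) = 4 ^ 2 by field_simp; ring,
      sqrt_sq (by norm_num)]
  have : √(8 / π) ≠ 0 := by positivity
  rw [gaussianTailGap, integral_Ioi_zero_gaussianPDFReal_zero_one, gaussianPDFReal_zero_one]
  simp only [ne_eq, OfNat.ofNat_ne_zero, not_false_eq_true, zero_pow, zero_add, neg_zero,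
    zero_div, exp_zero, mul_one]
  field_simp
  linarith

theorem tendsto_gaussianTailGap_atTop : Tendsto gaussianTailGap atTop (𝓝 0) := by
  have hm : Tendsto (fun x : ℝ ↦ 2 / (x + √(x ^ 2 + 8 / π))) atTop (𝓝 0) :=
    tendsto_const_nhds.div_atTop <| tendsto_atTop_mono
      (fun x ↦ le_add_of_nonneg_right (sqrt_nonneg _)) tendsto_id
  have h := (tendsto_gaussianPDFReal_zero_one_atTop.mul hm).sub
    (tendsto_integral_Ioi_atTop (integrable_gaussianPDFReal 0 1).integrableOn (a := 0))
  rw [mul_zero, sub_zero] at h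
  exact h

theorem gaussianTailGap_nonneg {x : ℝ} (hx : 0 ≤ x) : 0 ≤ gaussianTailGap x := by
  have hc : 0 < 8 / π := by positivity
  have hD : ∀ z, 0 < √(z ^ 2 + 8 / π) * (z + √(z ^ 2 + 8 / π)) := fun z ↦
    mul_pos (by positivity) (add_sqrt_sq_add_pos hc z)
  refine nonneg_of_hasDerivAt_of_sign_change (fun z _ ↦ hasDerivAt_gaussianTailGap z)
    (fun z _ hz w hzw ↦ ?_) gaussianTailGap_zero.ge tendsto_gaussianTailGap_atTop hx
  have hNz : 8 / π - 2 - (z * √(z ^ 2 + 8 / π) - z ^ 2) < 0 := by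
    by_contra! h
    exact hz.not_ge (div_nonneg (mul_nonneg (gaussianPDFReal_nonneg 0 1 z) h) (hD z).le)
  have hNw := monotone_mul_sqrt_sq_add_sub_sq hc hzw
  dsimp only at hNw
  exact div_nonpos_of_nonpos_of_nonneg (mul_nonpos_of_nonneg_of_nonpos
    (gaussianPDFReal_nonneg 0 1 w) (by linarith)) (hD w).le

/-- **Gaussian tail bound.** For every `x ≥ 0`,
`∫_x^∞ φ(u) du ≤ 2 φ(x) / (x + √(x² + 8/π))`, where
`φ(u) = (2π)^{-1/2} exp(-u²/2)` is the standard Gaussian density. -/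
theorem gaussian_tail_bound (x : ℝ) (hx : 0 ≤ x) :
    ∫ u in Set.Ioi x, (Real.sqrt (2 * Real.pi))⁻¹ * Real.exp (-u ^ 2 / 2) ≤
      2 * ((Real.sqrt (2 * Real.pi))⁻¹ * Real.exp (-x ^ 2 / 2)) /
        (x + Real.sqrt (x ^ 2 + 8 / Real.pi)) := by
  have h := gaussianTailGap_nonneg hx
  simp only [gaussianTailGap, gaussianPDFReal_zero_one] at h
  exact (sub_nonneg.1 h).trans_eq (by ring)
end

section
/- Let α ∈ (0,1) and λ > 0, let f(x) = (λ^α/Γ(α))·x^{α−1}·e^{−λx} for x > 0 be the Gamma(α, λ) density and S(t) = ∫_t^∞ f(x) dx its survival function, and set r(t) = f(t)/S(t) for t > 0. Then r is strictly decreasing on (0, ∞); equivalently, for every t > 0 one has t·f(t)/(λt − α + 1) < S(t). -/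
/-!
Write `k(x) = x^(α-1) e^(-λx)` and `u(x) = λx - α + 1`, so that `x k' = -u k`. The minorant
`G = x k / u` satisfies `G' = (1 - α) k / u² - k` and `G → 0` at infinity, hence
`∫_t^∞ k = G(t) + ∫_t^∞ (1 - α) k / u² > G(t)` when `α < 1`. The same inequality makes the
numerator of `(k / ∫_t^∞ k)' = (k / t) (t k - u ∫_t^∞ k) / (∫_t^∞ k)²` negative.
-/

open MeasureTheory Set Filter Topology Real

theorem hasDerivAt_integral_Ioi_s17 {f : ℝ → ℝ} {a x : ℝ} (hf : IntegrableOn f (Ioi a))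
    (hax : a < x) (hfx : ContinuousAt f x) :
    HasDerivAt (fun y => ∫ t in Ioi y, f t) (-f x) x := by
  have hprim : HasDerivAt (fun y => ∫ t in a..y, f t) (f x) x :=
    intervalIntegral.integral_hasDerivAt_right
      ((intervalIntegrable_iff_integrableOn_Ioc_of_le hax.le).2 (hf.mono_set Ioc_subset_Ioi_self))
      (AEStronglyMeasurable.stronglyMeasurableAtFilter_of_mem hf.1 (Ioi_mem_nhds hax)) hfx
  have hsplit : (fun y => ∫ t in Ioi y, f t) =ᶠ[𝓝 x]
      fun y => (∫ t in Ioi a, f t) - ∫ t in a..y, f t := by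
    filter_upwards [Ioi_mem_nhds hax] with y hy
    rw [← intervalIntegral.integral_Ioi_sub_Ioi hf hy.le, sub_sub_cancel]
  exact (hprim.const_sub _).congr_of_eventuallyEq hsplit

theorem setIntegral_Ioi_pos {f : ℝ → ℝ} {t : ℝ} (hf : IntegrableOn f (Ioi t))
    (hpos : ∀ x ∈ Ioi t, 0 < f x) : 0 < ∫ x in Ioi t, f x := by
  rw [setIntegral_pos_iff_support_of_nonneg_ae _ hf]
  · rw [inter_eq_right.2 fun x hx => Function.mem_support.2 (hpos x hx).ne', Real.volume_Ioi]
    exact ENNReal.zero_lt_top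
  · filter_upwards [ae_restrict_mem measurableSet_Ioi] with x hx
    exact (hpos x hx).le

/-- The Gamma(α, λ) density up to its normalising constant `λ^α / Γ(α)`, which cancels in the
failure rate. -/
noncomputable def gammaKernel (α lam x : ℝ) : ℝ := x ^ (α - 1) * exp (-lam * x)

noncomputable def gammaTailMinorant (α lam x : ℝ) : ℝ := x * gammaKernel α lam x / (lam * x - α + 1)

section

variable {α lam x t : ℝ}

theorem gammaKernel_pos (hx : 0 < x) : 0 < gammaKernel α lam x :=
  mul_pos (rpow_pos_of_pos hx _) (exp_pos _)

theorem hasDerivAt_gammaKernel (hx : 0 < x) :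
    HasDerivAt (gammaKernel α lam) (-(lam * x - α + 1) / x * gammaKernel α lam x) x := by
  have hexp : HasDerivAt (fun y => exp (-lam * y)) (exp (-lam * x) * -lam) x := by
    simpa using ((hasDerivAt_id x).const_mul (-lam)).exp
  refine ((hasDerivAt_rpow_const (Or.inl hx.ne')).mul hexp).congr_deriv ?_
  rw [gammaKernel, rpow_sub_one hx.ne' (α - 1)]
  field_simp
  ring

theorem integrableOn_gammaKernel (hα : 0 < α) (hlam : 0 < lam) :
    IntegrableOn (gammaKernel α lam) (Ioi 0) := by
  unfold gammaKernel
  simpa using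
    integrableOn_rpow_mul_exp_neg_mul_rpow (p := 1) (by linarith : -1 < α - 1) one_pos hlam

theorem hasDerivAt_gammaTailMinorant (hx : 0 < x) (hu : lam * x - α + 1 ≠ 0) :
    HasDerivAt (gammaTailMinorant α lam)
      ((1 - α) / (lam * x - α + 1) ^ 2 * gammaKernel α lam x - gammaKernel α lam x) x := by
  have hlin : HasDerivAt (fun y => lam * y - α + 1) lam x := by
    simpa using (((hasDerivAt_id x).const_mul lam).sub_const α).add_const 1
  refine (((hasDerivAt_id' x).mul (hasDerivAt_gammaKernel hx)).div hlin hu).congr_deriv ?_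
  simp only [Pi.mul_apply]
  rw [mul_comm lam x] at hu
  field_simp
  ring

theorem tendsto_gammaTailMinorant_atTop (hlam : 0 < lam) :
    Tendsto (gammaTailMinorant α lam) atTop (𝓝 0) := by
  have hnum : Tendsto (fun y => y * gammaKernel α lam y) atTop (𝓝 0) := by
    refine (tendsto_rpow_mul_exp_neg_mul_atTop_nhds_zero α lam hlam).congr' ?_
    filter_upwards [eventually_gt_atTop 0] with y hy
    rw [gammaKernel, rpow_sub_one hy.ne']
    field_simp
  have hden : Tendsto (fun y => (lam * y - α + 1)⁻¹) atTop (𝓝 0) :=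
    tendsto_inv_atTop_zero.comp <| tendsto_atTop_add_const_right _ _ <|
      tendsto_atTop_add_const_right _ _ (tendsto_id.const_mul_atTop hlam)
  unfold gammaTailMinorant
  simpa [div_eq_mul_inv] using hnum.mul hden

theorem integrableOn_one_sub_div_sq_mul_gammaKernel (hα0 : 0 < α) (hα1 : α ≤ 1) (hlam : 0 < lam)
    (ht : 0 < t) :
    IntegrableOn (fun x => (1 - α) / (lam * x - α + 1) ^ 2 * gammaKernel α lam x) (Ioi t) := by
  refine ((integrableOn_gammaKernel hα0 hlam).mono_set (Ioi_subset_Ioi ht.le)).bdd_mul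
    (c := (1 - α) / (lam * t - α + 1) ^ 2) (by fun_prop : Measurable _).aestronglyMeasurable ?_
  filter_upwards [ae_restrict_mem measurableSet_Ioi] with x hx
  have hut : 0 < lam * t - α + 1 := by nlinarith
  have hux : lam * t - α + 1 ≤ lam * x - α + 1 := by nlinarith [mem_Ioi.1 hx]
  rw [Real.norm_of_nonneg (by positivity)]
  gcongr

theorem integral_gammaKernel_Ioi_eq (hα0 : 0 < α) (hα1 : α ≤ 1) (hlam : 0 < lam) (ht : 0 < t) :
    ∫ x in Ioi t, gammaKernel α lam x = gammaTailMinorant α lam t +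
      ∫ x in Ioi t, (1 - α) / (lam * x - α + 1) ^ 2 * gammaKernel α lam x := by
  have hH := integrableOn_one_sub_div_sq_mul_gammaKernel hα0 hα1 hlam ht
  have hk : IntegrableOn (gammaKernel α lam) (Ioi t) :=
    (integrableOn_gammaKernel hα0 hlam).mono_set (Ioi_subset_Ioi ht.le)
  have hFTC := integral_Ioi_of_hasDerivAt_of_tendsto'
    (fun x hx => hasDerivAt_gammaTailMinorant (ht.trans_le hx) (by nlinarith [mem_Ici.1 hx]))
    (hH.sub hk) (tendsto_gammaTailMinorant_atTop hlam)
  rw [integral_sub hH hk] at hFTC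
  linarith

theorem gammaTailMinorant_lt_integral_Ioi (hα : α ∈ Ioo 0 1) (hlam : 0 < lam) (ht : 0 < t) :
    gammaTailMinorant α lam t < ∫ x in Ioi t, gammaKernel α lam x := by
  rw [integral_gammaKernel_Ioi_eq hα.1 hα.2.le hlam ht, lt_add_iff_pos_right]
  refine setIntegral_Ioi_pos (integrableOn_one_sub_div_sq_mul_gammaKernel hα.1 hα.2.le hlam ht)
    fun x hx => ?_
  have hx0 : 0 < x := ht.trans hx
  have hu : 0 < lam * x - α + 1 := by nlinarith [hα.2]
  exact mul_pos (div_pos (by linarith [hα.2]) (pow_pos hu 2)) (gammaKernel_pos hx0)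

theorem strictAntiOn_gammaKernel_div_integral_Ioi (hα : α ∈ Ioo 0 1) (hlam : 0 < lam) :
    StrictAntiOn (fun t => gammaKernel α lam t / ∫ x in Ioi t, gammaKernel α lam x) (Ioi 0) := by
  set k := gammaKernel α lam
  set K := fun t => ∫ x in Ioi t, k x
  have hk := integrableOn_gammaKernel hα.1 hlam
  have hK : ∀ t > 0, HasDerivAt K (-k t) t := fun t ht =>
    hasDerivAt_integral_Ioi_s17 hk ht (hasDerivAt_gammaKernel ht).continuousAt
  have hKpos : ∀ t > 0, 0 < K t := fun t ht =>
    setIntegral_Ioi_pos (hk.mono_set (Ioi_subset_Ioi ht.le)) fun _ hx =>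
      gammaKernel_pos (ht.trans hx)
  have hr : ∀ t > 0, HasDerivAt (fun t => k t / K t)
      ((-(lam * t - α + 1) / t * k t * K t - k t * -k t) / K t ^ 2) t := fun t ht =>
    (hasDerivAt_gammaKernel ht).div (hK t ht) (hKpos t ht).ne'
  refine strictAntiOn_of_deriv_neg (convex_Ioi 0)
    (fun t ht => (hr t ht).continuousAt.continuousWithinAt) fun t ht => ?_
  rw [interior_Ioi] at ht
  have hu : 0 < lam * t - α + 1 := by nlinarith [mem_Ioi.1 ht, hα.2]
  have hlt : t * k t < K t * (lam * t - α + 1) :=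
    (div_lt_iff₀ hu).1 (gammaTailMinorant_lt_integral_Ioi hα hlam ht)
  have hnum : -(lam * t - α + 1) / t * k t * K t - k t * -k t
      = k t / t * (t * k t - K t * (lam * t - α + 1)) := by
    have := (mem_Ioi.1 ht).ne'
    field_simp
    ring
  rw [(hr t ht).deriv, hnum]
  exact div_neg_of_neg_of_pos
    (mul_neg_of_pos_of_neg (div_pos (gammaKernel_pos ht) ht) (by linarith)) (pow_pos (hKpos t ht) 2)

end

/-- For the Gamma(α, λ) density `f` with `α ∈ (0,1)`, `λ > 0`, survival function
`S(t) = ∫_t^∞ f`, the failure rate `r(t) = f(t)/S(t)` is strictly decreasing on `(0,∞)`;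
equivalently, `t f(t)/(λ t - α + 1) < S(t)` for every `t > 0`. -/
theorem gamma_failure_rate_strictAnti
    (α lam : ℝ) (hα : α ∈ Set.Ioo (0 : ℝ) 1) (hlam : 0 < lam)
    (f : ℝ → ℝ)
    (hf : ∀ x > (0 : ℝ), f x = lam ^ α / Real.Gamma α * x ^ (α - 1) * Real.exp (-lam * x))
    (S : ℝ → ℝ) (hS : ∀ t, S t = ∫ x in Set.Ioi t, f x)
    (r : ℝ → ℝ) (hr : ∀ t > (0 : ℝ), r t = f t / S t) :
    StrictAntiOn r (Set.Ioi (0 : ℝ)) ∧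
      ∀ t > (0 : ℝ), t * f t / (lam * t - α + 1) < S t := by
  set c := lam ^ α / Real.Gamma α
  have hc : 0 < c := div_pos (rpow_pos_of_pos hlam α) (Gamma_pos_of_pos hα.1)
  have hfk : ∀ x > 0, f x = c * gammaKernel α lam x := fun x hx => by
    rw [hf x hx, gammaKernel, mul_assoc]
  have hSK : ∀ t > 0, S t = c * ∫ x in Ioi t, gammaKernel α lam x := fun t ht => by
    rw [hS, ← integral_const_mul]
    exact setIntegral_congr_fun measurableSet_Ioi fun x hx => hfk x (ht.trans hx)
  refine ⟨(strictAntiOn_gammaKernel_div_integral_Ioi hα hlam).congr fun t ht => ?_,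
    fun t ht => ?_⟩
  · rw [hr t ht, hfk t ht, hSK t ht, mul_div_mul_left _ _ hc.ne']
  · rw [hfk t ht, hSK t ht, mul_left_comm, mul_div_assoc]
    exact mul_lt_mul_of_pos_left (gammaTailMinorant_lt_integral_Ioi hα hlam ht) hc
end

section
/- Let α ∈ (0,1) and λ > 0, let f(x) = (λ^α/Γ(α))·x^{α−1}·e^{−λx} for x > 0 be the Gamma(α, λ) density and S(t) = ∫_t^∞ f(x) dx its survival function, and set r(t) = f(t)/S(t) for t > 0. Then r(t) > λ for every t > 0. -/
open MeasureTheory Set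

/-! For `x > t` we have `x ^ (α - 1) < t ^ (α - 1)` since `α < 1`, so
`S t < (λ ^ α / Γ(α)) t ^ (α - 1) ∫_t^∞ e^{-λx} dx = f t / λ`. -/

theorem setIntegral_lt_setIntegral_of_forall_lt {X : Type*} [MeasurableSpace X] {μ : Measure X}
    {s : Set X} {f g : X → ℝ} (hs : MeasurableSet s) (hμs : μ s ≠ 0)
    (hf : IntegrableOn f s μ) (hg : IntegrableOn g s μ) (hfg : ∀ x ∈ s, f x < g x) :
    ∫ x in s, f x ∂μ < ∫ x in s, g x ∂μ := by
  rw [← sub_pos, ← integral_sub hg hf]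
  refine (setIntegral_pos_iff_support_of_nonneg_ae ?_ (hg.sub hf)).2 ?_
  · filter_upwards [ae_restrict_mem hs] with x hx
    exact sub_nonneg.2 (hfg x hx).le
  · have hsupp : Function.support (g - f) ∩ s = s :=
      inter_eq_right.2 fun x hx => (sub_pos.2 (hfg x hx)).ne'
    rw [hsupp]
    exact pos_iff_ne_zero.2 hμs

section RpowMulExp

variable {t p lam : ℝ}

theorem integrableOn_rpow_mul_exp_neg_mul_Ioi (ht : 0 < t) (hp : p ≤ 0) (hlam : 0 < lam) :
    IntegrableOn (fun x => x ^ p * Real.exp (-lam * x)) (Ioi t) := by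
  refine Integrable.mono' ((exp_neg_integrableOn_Ioi t hlam).const_mul (t ^ p)) ?_ ?_
  · refine ContinuousOn.aestronglyMeasurable (fun x hx => ?_) measurableSet_Ioi
    exact ((Real.continuousAt_rpow_const x p (Or.inl (ht.trans hx).ne')).mul
      (by fun_prop)).continuousWithinAt
  · filter_upwards [ae_restrict_mem measurableSet_Ioi] with x hx
    have hx0 : 0 < x := ht.trans hx
    rw [Real.norm_of_nonneg (by positivity)]
    exact mul_le_mul_of_nonneg_right (Real.rpow_le_rpow_of_nonpos ht hx.le hp) (by positivity)

theorem setIntegral_rpow_mul_exp_neg_mul_Ioi_pos (ht : 0 < t) (hp : p ≤ 0) (hlam : 0 < lam) :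
    0 < ∫ x in Ioi t, x ^ p * Real.exp (-lam * x) := by
  simpa using setIntegral_lt_setIntegral_of_forall_lt measurableSet_Ioi (by simp)
    integrableOn_zero (integrableOn_rpow_mul_exp_neg_mul_Ioi ht hp hlam)
    fun x hx => by have := ht.trans hx; positivity

theorem setIntegral_rpow_mul_exp_neg_mul_Ioi_lt (ht : 0 < t) (hp : p < 0) (hlam : 0 < lam) :
    ∫ x in Ioi t, x ^ p * Real.exp (-lam * x) < t ^ p * Real.exp (-lam * t) / lam := by
  have hbound : ∫ x in Ioi t, t ^ p * Real.exp (-lam * x) = t ^ p * Real.exp (-lam * t) / lam := by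
    rw [integral_const_mul, integral_exp_mul_Ioi (neg_lt_zero.2 hlam)]
    ring
  rw [← hbound]
  refine setIntegral_lt_setIntegral_of_forall_lt measurableSet_Ioi (by simp)
    (integrableOn_rpow_mul_exp_neg_mul_Ioi ht hp.le hlam)
    ((exp_neg_integrableOn_Ioi t hlam).const_mul _) fun x hx => ?_
  exact mul_lt_mul_of_pos_right (Real.rpow_lt_rpow_of_neg ht hx hp) (Real.exp_pos _)

end RpowMulExp

/-- For the Gamma(α, λ) density `f` with `α ∈ (0,1)`, `λ > 0`, survival function
`S(t) = ∫_t^∞ f`, the failure rate `r(t) = f(t)/S(t)` satisfies `r(t) > λ` for every `t > 0`. -/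
theorem gamma_failure_rate_gt
    (α lam : ℝ) (hα : α ∈ Set.Ioo (0 : ℝ) 1) (hlam : 0 < lam)
    (f : ℝ → ℝ)
    (hf : ∀ x > (0 : ℝ), f x = lam ^ α / Real.Gamma α * x ^ (α - 1) * Real.exp (-lam * x))
    (S : ℝ → ℝ) (hS : ∀ t, S t = ∫ x in Set.Ioi t, f x)
    (r : ℝ → ℝ) (hr : ∀ t > (0 : ℝ), r t = f t / S t) :
    ∀ t > (0 : ℝ), lam < r t := by
  intro t ht
  obtain ⟨hα0, hα1⟩ := hα
  set c := lam ^ α / Real.Gamma α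
  have hc : 0 < c := div_pos (Real.rpow_pos_of_pos hlam α) (Real.Gamma_pos_of_pos hα0)
  have hp : α - 1 < 0 := by linarith
  have hSt : S t = c * ∫ x in Ioi t, x ^ (α - 1) * Real.exp (-lam * x) := by
    rw [hS, ← integral_const_mul]
    refine setIntegral_congr_fun measurableSet_Ioi fun x hx => ?_
    rw [hf x (ht.trans hx), mul_assoc]
  have hSpos : 0 < S t :=
    hSt ▸ mul_pos hc (setIntegral_rpow_mul_exp_neg_mul_Ioi_pos ht hp.le hlam)
  rw [hr t ht, lt_div_iff₀ hSpos, hSt, hf t ht]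
  calc lam * (c * ∫ x in Ioi t, x ^ (α - 1) * Real.exp (-lam * x))
      < lam * (c * (t ^ (α - 1) * Real.exp (-lam * t) / lam)) := by
        gcongr
        exact setIntegral_rpow_mul_exp_neg_mul_Ioi_lt ht hp hlam
    _ = c * t ^ (α - 1) * Real.exp (-lam * t) := by
        field_simp
end
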